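/- arXiv:2101.11356 — 6 statements merged into one kernel-verified Lean document; each statement's English description precedes it below -/
import Mathlib

section
/- Let Y be a real-valued random variable on a probability space with characteristic function φ(t) = E[exp(i·t·Y)]. Let s ∈ ℝ be such that P(Y = s) = 0, and assume that the function t ↦ Im(exp(−i·t·s)·φ(t))/t is Lebesgue integrable on (0, ∞). Then P(Y ≤ s) = 1/2 − (1/π)·∫₀^∞ Im(exp(−i·t·s)·φ(t))/t dt. -/
open MeasureTheory Set

open Real Filter Topology
set_option maxHeartbeats 1000000

noncomputable def GPSi (T : ℝ) : ℝ := ∫ t in Ioc 0 T, Real.sin t / t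

lemma gp_exp_sin_int (u T : ℝ) :
    ∫ t in (0:ℝ)..T, Real.exp (-(u*t)) * Real.sin t
      = (1 - Real.exp (-(u*T)) * (Real.cos T + u * Real.sin T)) / (1 + u^2) := by
  have hu2 : (1:ℝ) + u^2 ≠ 0 := by positivity
  have D : ∀ x : ℝ, HasDerivAt
      (fun t : ℝ => (Real.exp (-(u*t)) * (-(u * Real.sin t) - Real.cos t)) / (1+u^2))
      (Real.exp (-(u*x)) * Real.sin x) x := by
    intro x
    have h1 : HasDerivAt (fun t : ℝ => Real.exp (-(u*t))) (Real.exp (-(u*x)) * (-u)) x := by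
      have : HasDerivAt (fun t : ℝ => -(u*t)) (-u) x := by
        simpa [Pi.neg_def] using ((hasDerivAt_id x).const_mul u).neg
      exact this.exp
    have h2 : HasDerivAt (fun t : ℝ => -(u * Real.sin t) - Real.cos t)
        (-(u * Real.cos x) - (-Real.sin x)) x :=
      (((Real.hasDerivAt_sin x).const_mul u).neg).sub (Real.hasDerivAt_cos x)
    have := (h1.mul h2).div_const (1+u^2)
    refine this.congr_deriv ?_
    field_simp
    ring
  rw [intervalIntegral.integral_eq_sub_of_hasDerivAt (fun x _ => D x)
    (((Real.continuous_exp.comp (continuous_const.mul continuous_id).neg).mul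
      Real.continuous_sin).intervalIntegrable _ _)]
  simp [Real.exp_zero]
  ring

lemma gp_sinc_bound {t : ℝ} (ht : 0 < t) : |Real.sin t / t| ≤ 1 := by
  rw [abs_div, abs_of_pos ht, div_le_one ht]
  calc |Real.sin t| ≤ |t| := Real.abs_sin_le_abs
  _ = t := abs_of_pos ht

lemma gp_sinc_integrableOn (a b : ℝ) (ha : 0 ≤ a) :
    IntegrableOn (fun t => Real.sin t / t) (Ioc a b) := by
  apply Integrable.mono' (integrable_const (1:ℝ))
  · exact (Real.measurable_sin.div measurable_id).aestronglyMeasurable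
  · filter_upwards [ae_restrict_mem measurableSet_Ioc] with t ht
    exact gp_sinc_bound (lt_of_le_of_lt ha ht.1)

lemma gp_exp_integrable {t : ℝ} (ht : 0 < t) :
    Integrable (fun u : ℝ => Real.exp (-(t*u))) (volume.restrict (Ioi 0)) := by
  have := exp_neg_integrableOn_Ioi 0 ht
  simp only [neg_mul] at this
  exact this

lemma gp_exp_integral {t : ℝ} (ht : 0 < t) :
    ∫ u in Ioi (0:ℝ), Real.exp (-(t*u)) = t⁻¹ := by
  have h := integral_comp_mul_left_Ioi (fun x => Real.exp (-x)) 0 ht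
  simp only [mul_zero, smul_eq_mul] at h
  rw [h, integral_exp_neg_Ioi, neg_zero, Real.exp_zero, mul_one]

lemma gp_si_eq {T : ℝ} (hT : 0 < T) :
    GPSi T = ∫ u in Ioi (0:ℝ),
      (1 - Real.exp (-(T*u)) * (Real.cos T + u * Real.sin T)) / (1 + u^2) := by
  have hint : Integrable (fun p : ℝ × ℝ => Real.exp (-(p.1 * p.2)) * Real.sin p.1)
      ((volume.restrict (Ioc 0 T)).prod (volume.restrict (Ioi 0))) := by
    have hmeas : AEStronglyMeasurable (fun p : ℝ × ℝ => Real.exp (-(p.1 * p.2)) * Real.sin p.1)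
        ((volume.restrict (Ioc 0 T)).prod (volume.restrict (Ioi 0))) :=
      ((Real.continuous_exp.comp (continuous_fst.mul continuous_snd).neg).mul
        (Real.continuous_sin.comp continuous_fst)).aestronglyMeasurable
    rw [integrable_prod_iff hmeas]
    constructor
    · filter_upwards [ae_restrict_mem measurableSet_Ioc] with t ht
      exact (gp_exp_integrable ht.1).mul_const _
    · apply Integrable.mono' (integrable_const (1:ℝ))
      · exact AEStronglyMeasurable.integral_prod_right'
          (f := fun p : ℝ × ℝ => ‖Real.exp (-(p.1 * p.2)) * Real.sin p.1‖) hmeas.norm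
      · filter_upwards [ae_restrict_mem measurableSet_Ioc] with t ht
        have hcalc : ∫ u in Ioi (0:ℝ), ‖Real.exp (-(t*u)) * Real.sin t‖
            = |Real.sin t| / t := by
          have : ∀ u : ℝ, ‖Real.exp (-(t*u)) * Real.sin t‖
              = Real.exp (-(t*u)) * |Real.sin t| := by
            intro u
            rw [norm_mul, Real.norm_eq_abs, Real.norm_eq_abs,
              abs_of_pos (Real.exp_pos _)]
          simp_rw [this]
          rw [integral_mul_const]
          rw [gp_exp_integral ht.1]
          ring
        rw [hcalc]
        rw [Real.norm_eq_abs, abs_div, abs_abs, abs_of_pos ht.1, div_le_one ht.1]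
        calc |Real.sin t| ≤ |t| := Real.abs_sin_le_abs
        _ = t := abs_of_pos ht.1
  have swap := MeasureTheory.integral_integral_swap
    (f := fun t u => Real.exp (-(t * u)) * Real.sin t)
    (μ := volume.restrict (Ioc 0 T)) (ν := volume.restrict (Ioi 0)) hint
  have lhs_eq : ∫ t in Ioc (0:ℝ) T, ∫ u in Ioi (0:ℝ), Real.exp (-(t*u)) * Real.sin t
      = GPSi T := by
    rw [GPSi]
    apply setIntegral_congr_fun measurableSet_Ioc
    intro t ht
    show (∫ u in Ioi (0:ℝ), Real.exp (-(t*u)) * Real.sin t) = Real.sin t / t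
    have : ∫ u in Ioi (0:ℝ), Real.exp (-(t*u)) * Real.sin t
        = (∫ u in Ioi (0:ℝ), Real.exp (-(t*u))) * Real.sin t := integral_mul_const _ _
    rw [this]
    rw [gp_exp_integral ht.1]; ring
  have rhs_eq : ∫ u in Ioi (0:ℝ), ∫ t in Ioc (0:ℝ) T, Real.exp (-(t*u)) * Real.sin t
      = ∫ u in Ioi (0:ℝ),
        (1 - Real.exp (-(T*u)) * (Real.cos T + u * Real.sin T)) / (1 + u^2) := by
    apply integral_congr_ae
    apply Filter.Eventually.of_forall
    intro u
    show (∫ t in Ioc (0:ℝ) T, Real.exp (-(t*u)) * Real.sin t)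
      = (1 - Real.exp (-(T*u)) * (Real.cos T + u * Real.sin T)) / (1 + u^2)
    rw [← intervalIntegral.integral_of_le hT.le]
    have : ∀ t : ℝ, Real.exp (-(t*u)) * Real.sin t = Real.exp (-(u*t)) * Real.sin t := by
      intro t; rw [mul_comm t u]
    simp_rw [this]
    rw [gp_exp_sin_int u T, mul_comm u T]
  rw [← lhs_eq, swap, rhs_eq]

lemma gp_dom_integrable :
    IntegrableOn (fun u : ℝ => (1+u^2)⁻¹ + 2 * Real.exp (-u)) (Ioi 0) := by
  have h := exp_neg_integrableOn_Ioi 0 (one_pos : (0:ℝ) < 1)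
  simp only [neg_mul, one_mul] at h
  exact integrable_inv_one_add_sq.integrableOn.add (h.const_mul 2)

lemma gp_num_bound {T u : ℝ} (hu : 0 < u) :
    |1 - Real.exp (-(T*u)) * (Real.cos T + u * Real.sin T)|
      ≤ 1 + Real.exp (-(T*u)) * (1 + u) := by
  have h1 : |Real.cos T + u * Real.sin T| ≤ 1 + u := by
    calc |Real.cos T + u * Real.sin T| ≤ |Real.cos T| + |u * Real.sin T| := abs_add_le _ _
    _ ≤ 1 + u := by
        have := Real.abs_cos_le_one T
        have h2 : |u * Real.sin T| = u * |Real.sin T| := by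
          rw [abs_mul, abs_of_pos hu]
        have := Real.abs_sin_le_one T
        nlinarith [abs_nonneg (Real.sin T)]
  calc |1 - Real.exp (-(T*u)) * (Real.cos T + u * Real.sin T)|
      ≤ 1 + Real.exp (-(T*u)) * |Real.cos T + u * Real.sin T| := by
        have := norm_sub_le (1:ℝ) (Real.exp (-(T*u)) * (Real.cos T + u * Real.sin T))
        simpa [Real.norm_eq_abs, abs_mul, abs_of_pos (Real.exp_pos (-(T*u)))] using this
  _ ≤ 1 + Real.exp (-(T*u)) * (1 + u) := by
      have := mul_le_mul_of_nonneg_left h1 (Real.exp_pos (-(T*u))).le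
      linarith

lemma gp_pointwise_bound {T u : ℝ} (hT : 1 ≤ T) (hu : 0 < u) :
    |(1 - Real.exp (-(T*u)) * (Real.cos T + u * Real.sin T)) / (1 + u^2)|
      ≤ (1+u^2)⁻¹ + 2 * Real.exp (-u) := by
  have h1 : (0:ℝ) < 1 + u^2 := by positivity
  have he : Real.exp (-(T*u)) ≤ Real.exp (-u) := by
    apply Real.exp_le_exp.2
    nlinarith
  have hnum := gp_num_bound (T := T) hu
  rw [abs_div, abs_of_pos h1, div_le_iff₀ h1]
  have hepos := Real.exp_pos (-u)
  have h2 : (1:ℝ) + u ≤ 2*(1+u^2) := by nlinarith [sq_nonneg (u-1)]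
  have h3 : Real.exp (-(T*u)) * (1+u) ≤ Real.exp (-u) * (2*(1+u^2)) := by
    apply mul_le_mul he h2 (by positivity) hepos.le
  have h4 : (1+u^2)⁻¹ * (1+u^2) = 1 := inv_mul_cancel₀ h1.ne'
  nlinarith [hnum, h3]

lemma gp_F_tendsto :
    Tendsto (fun T => ∫ u in Ioi (0:ℝ),
      (1 - Real.exp (-(T*u)) * (Real.cos T + u * Real.sin T)) / (1 + u^2))
      atTop (𝓝 (π/2)) := by
  have hval : ∫ u in Ioi (0:ℝ), (1+u^2)⁻¹ = π/2 := by
    rw [integral_Ioi_inv_one_add_sq]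
    simp
  rw [← hval]
  apply MeasureTheory.tendsto_integral_filter_of_dominated_convergence
    (fun u : ℝ => (1+u^2)⁻¹ + 2 * Real.exp (-u))
  · apply Filter.Eventually.of_forall
    intro T
    apply Continuous.aestronglyMeasurable
    apply Continuous.div (by fun_prop) (by fun_prop)
    intro x; positivity
  · filter_upwards [Filter.eventually_ge_atTop (1:ℝ)] with T hT
    filter_upwards [ae_restrict_mem measurableSet_Ioi] with u hu
    rw [Real.norm_eq_abs]
    exact gp_pointwise_bound hT hu
  · exact gp_dom_integrable
  · filter_upwards [ae_restrict_mem measurableSet_Ioi] with u hu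
    have hu' : (0:ℝ) < u := hu
    have h0 : Tendsto (fun T : ℝ => Real.exp (-(T*u)) * (Real.cos T + u * Real.sin T))
        atTop (𝓝 0) := by
      apply squeeze_zero_norm (t₀ := atTop) (a := fun T : ℝ => (1+u) * Real.exp (-(T*u)))
      · intro T
        rw [Real.norm_eq_abs, abs_mul, abs_of_pos (Real.exp_pos _)]
        have h1 : |Real.cos T + u * Real.sin T| ≤ 1 + u := by
          have := Real.abs_cos_le_one T
          have h2 : |u * Real.sin T| = u * |Real.sin T| := by
            rw [abs_mul, abs_of_pos hu']
          have := Real.abs_sin_le_one T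
          calc |Real.cos T + u * Real.sin T| ≤ |Real.cos T| + |u * Real.sin T| := abs_add_le _ _
          _ ≤ 1 + u := by nlinarith [abs_nonneg (Real.sin T), hu']
        have := mul_le_mul_of_nonneg_left h1 (Real.exp_pos (-(T*u))).le
        linarith
      · have hTu : Tendsto (fun T : ℝ => T * u) atTop atTop :=
          Tendsto.atTop_mul_const hu tendsto_id
        have := Real.tendsto_exp_neg_atTop_nhds_zero.comp hTu
        have := this.const_mul (1+u)
        simpa using this
    have := ((tendsto_const_nhds (x := (1:ℝ))).sub h0).div_const (1+u^2)
    simpa using this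

lemma gp_si_tendsto : Tendsto GPSi atTop (𝓝 (π/2)) := by
  apply gp_F_tendsto.congr'
  filter_upwards [Filter.eventually_gt_atTop (0:ℝ)] with T hT
  exact (gp_si_eq hT).symm

lemma gp_si_small {a : ℝ} (ha : 0 ≤ a) : |GPSi a| ≤ a := by
  have h := norm_setIntegral_le_of_norm_le_const (μ := volume) (s := Ioc (0:ℝ) a)
    (f := fun t => Real.sin t / t) (C := 1) (by exact measure_Ioc_lt_top)
    (fun x hx => by rw [Real.norm_eq_abs]; exact gp_sinc_bound hx.1)
  rw [Real.norm_eq_abs] at h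
  calc |GPSi a| ≤ 1 * (volume (Ioc (0:ℝ) a)).toReal := h
  _ = a := by rw [one_mul, Real.volume_Ioc, sub_zero, ENNReal.toReal_ofReal ha]

lemma gp_si_bound (T : ℝ) : |GPSi T| ≤ π/2 + 2 := by
  have hpi : (0:ℝ) < π := Real.pi_pos
  rcases le_or_gt T 1 with hT | hT
  · rcases le_or_gt T 0 with hT0 | hT0
    · have : GPSi T = 0 := by
        rw [GPSi, Ioc_eq_empty (by simpa using hT0), setIntegral_empty]
      rw [this]; simp; positivity
    · calc |GPSi T| ≤ T := gp_si_small hT0.le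
      _ ≤ π/2 + 2 := by linarith
  · rw [gp_si_eq (lt_trans one_pos hT)]
    have hb := MeasureTheory.norm_integral_le_of_norm_le gp_dom_integrable
      (by filter_upwards [ae_restrict_mem measurableSet_Ioi] with u hu
          rw [Real.norm_eq_abs]
          exact gp_pointwise_bound hT.le hu)
    rw [Real.norm_eq_abs] at hb
    have hval : ∫ u in Ioi (0:ℝ), ((1+u^2)⁻¹ + 2 * Real.exp (-u)) = π/2 + 2 := by
      have h1 : IntegrableOn (fun u : ℝ => 2 * Real.exp (-u)) (Ioi 0) := by
        have h := exp_neg_integrableOn_Ioi 0 (one_pos : (0:ℝ) < 1)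
        simp only [neg_mul, one_mul] at h
        exact h.const_mul 2
      rw [integral_add integrable_inv_one_add_sq.integrableOn h1]
      rw [integral_Ioi_inv_one_add_sq, MeasureTheory.integral_const_mul, integral_exp_neg_Ioi]
      simp
    rw [hval] at hb
    exact hb

lemma gp_si_diff {a b : ℝ} (ha : 0 < a) (hab : a ≤ b) :
    ∫ t in Ioc a b, Real.sin t / t = GPSi b - GPSi a := by
  have hsplit : Ioc (0:ℝ) b = Ioc 0 a ∪ Ioc a b := (Ioc_union_Ioc_eq_Ioc ha.le hab).symm
  have h1 := gp_sinc_integrableOn 0 a le_rfl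
  have h2 := gp_sinc_integrableOn a b ha.le
  have hb : GPSi b = GPSi a + ∫ t in Ioc a b, Real.sin t / t := by
    rw [GPSi, hsplit, setIntegral_union (Set.Ioc_disjoint_Ioc_of_le le_rfl) measurableSet_Ioc h1 h2]
    rfl
  rw [hb, GPSi]; ring

lemma gp_si_sub {x a b : ℝ} (hx : 0 < x) (ha : 0 < a) (hab : a ≤ b) :
    ∫ t in Ioc a b, Real.sin (t*x) / t = GPSi (b*x) - GPSi (a*x) := by
  rw [← intervalIntegral.integral_of_le hab]
  have h2 : ∀ t ∈ uIcc a b, Real.sin (t*x)/t = x * ((fun y => Real.sin y / y) (x * t)) := by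
    intro t ht
    have ht0 : 0 < t := lt_of_lt_of_le ha (by rw [uIcc_of_le hab] at ht; exact ht.1)
    show Real.sin (t*x)/t = x * (Real.sin (x*t) / (x*t))
    rw [mul_comm t x]
    field_simp
  rw [intervalIntegral.integral_congr h2, intervalIntegral.integral_const_mul]
  have h3 : (x * ∫ t in a..b, (fun y => Real.sin y / y) (x * t))
      = ∫ y in x*a..x*b, Real.sin y / y := intervalIntegral.mul_integral_comp_mul_left (f := fun y => Real.sin y / y) x
  rw [h3, intervalIntegral.integral_of_le (by nlinarith : x * a ≤ x * b),
    gp_si_diff (by positivity) (by nlinarith : x * a ≤ x * b), mul_comm x a, mul_comm x b]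

lemma gp_int_eq {x a b : ℝ} (ha : 0 < a) (hab : a ≤ b) :
    ∫ t in Ioc a b, Real.sin (t*x) / t
      = if 0 < x then GPSi (b*x) - GPSi (a*x)
        else if x < 0 then -(GPSi (b*(-x)) - GPSi (a*(-x))) else 0 := by
  rcases lt_trichotomy x 0 with hx | hx | hx
  · rw [if_neg (by linarith), if_pos hx]
    have heq : ∀ t : ℝ, Real.sin (t*x)/t = -(Real.sin (t*(-x))/t) := by
      intro t
      rw [show t*x = -(t*(-x)) by ring, Real.sin_neg]
      ring
    simp_rw [heq]
    rw [integral_neg, gp_si_sub (by linarith : (0:ℝ) < -x) ha hab]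
  · subst hx
    simp
  · rw [if_pos hx]
    exact gp_si_sub hx ha hab

lemma gp_abs_bound {x a b : ℝ} (ha : 0 < a) (hab : a ≤ b) :
    |∫ t in Ioc a b, Real.sin (t*x) / t| ≤ π + 4 := by
  have hpi : (0:ℝ) < π := Real.pi_pos
  rw [gp_int_eq ha hab]
  split_ifs with h1 h2
  · calc |GPSi (b*x) - GPSi (a*x)| ≤ |GPSi (b*x)| + |GPSi (a*x)| := abs_sub _ _
    _ ≤ (π/2 + 2) + (π/2 + 2) := add_le_add (gp_si_bound _) (gp_si_bound _)
    _ = π + 4 := by ring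
  · rw [abs_neg]
    calc |GPSi (b*(-x)) - GPSi (a*(-x))| ≤ |GPSi (b*(-x))| + |GPSi (a*(-x))| := abs_sub _ _
    _ ≤ (π/2 + 2) + (π/2 + 2) := add_le_add (gp_si_bound _) (gp_si_bound _)
    _ = π + 4 := by ring
  · rw [abs_zero]; linarith

lemma gp_limit (x : ℝ) :
    Tendsto (fun n : ℕ => ∫ t in Ioc ((n:ℝ)⁻¹) (n:ℝ), Real.sin (t*x) / t) atTop
      (𝓝 ((π/2) * Real.sign x)) := by
  have hkey : ∀ᶠ n : ℕ in atTop,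
      ∫ t in Ioc ((n:ℝ)⁻¹) (n:ℝ), Real.sin (t*x) / t
        = if 0 < x then GPSi ((n:ℝ)*x) - GPSi ((n:ℝ)⁻¹*x)
          else if x < 0 then -(GPSi ((n:ℝ)*(-x)) - GPSi ((n:ℝ)⁻¹*(-x))) else 0 := by
    filter_upwards [Filter.eventually_ge_atTop 1] with n hn
    have hn1 : (1:ℝ) ≤ (n:ℝ) := by exact_mod_cast hn
    have hpos : (0:ℝ) < (n:ℝ)⁻¹ := by positivity
    have hle : ((n:ℝ)⁻¹ : ℝ) ≤ (n:ℝ) := by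
      calc ((n:ℝ)⁻¹ : ℝ) ≤ 1 := by
            rw [inv_le_one_iff₀]; right; exact hn1
      _ ≤ (n:ℝ) := hn1
    exact gp_int_eq hpos hle
  have hlim_pos : ∀ y : ℝ, 0 < y →
      Tendsto (fun n : ℕ => GPSi ((n:ℝ)*y) - GPSi ((n:ℝ)⁻¹*y)) atTop (𝓝 (π/2)) := by
    intro y hy
    have l1 : Tendsto (fun n : ℕ => GPSi ((n:ℝ)*y)) atTop (𝓝 (π/2)) :=
      gp_si_tendsto.comp (Tendsto.atTop_mul_const hy tendsto_natCast_atTop_atTop)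
    have l2 : Tendsto (fun n : ℕ => GPSi ((n:ℝ)⁻¹*y)) atTop (𝓝 0) := by
      apply squeeze_zero_norm (a := fun n : ℕ => (n:ℝ)⁻¹ * y)
      · intro n
        rw [Real.norm_eq_abs]
        exact gp_si_small (by positivity)
      · have h := (tendsto_inv_atTop_zero.comp tendsto_natCast_atTop_atTop).mul_const y
        simpa using h
    have := l1.sub l2
    simpa using this
  rcases lt_trichotomy x 0 with hx | hx | hx
  · have h2 := (hlim_pos (-x) (by linarith)).neg
    have h1 : Tendsto (fun n : ℕ =>
        if 0 < x then GPSi ((n:ℝ)*x) - GPSi ((n:ℝ)⁻¹*x)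
        else if x < 0 then -(GPSi ((n:ℝ)*(-x)) - GPSi ((n:ℝ)⁻¹*(-x))) else 0) atTop
        (𝓝 ((π/2) * Real.sign x)) := by
      simp only [if_neg (asymm hx), if_pos hx]
      rw [Real.sign_of_neg hx, show (π/2) * (-1:ℝ) = -(π/2) by ring]
      exact h2
    exact Filter.Tendsto.congr' (hkey.mono fun n h => h.symm) h1
  · subst hx
    have h1 : Tendsto (fun n : ℕ =>
        if 0 < (0:ℝ) then GPSi ((n:ℝ)*0) - GPSi ((n:ℝ)⁻¹*0)
        else if (0:ℝ) < 0 then -(GPSi ((n:ℝ)*(-0)) - GPSi ((n:ℝ)⁻¹*(-0))) else 0) atTop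
        (𝓝 ((π/2) * Real.sign 0)) := by
      simp only [lt_irrefl, if_false, Real.sign_zero, mul_zero]
      exact tendsto_const_nhds
    exact Filter.Tendsto.congr' (hkey.mono fun n h => h.symm) h1
  · have h1 : Tendsto (fun n : ℕ =>
        if 0 < x then GPSi ((n:ℝ)*x) - GPSi ((n:ℝ)⁻¹*x)
        else if x < 0 then -(GPSi ((n:ℝ)*(-x)) - GPSi ((n:ℝ)⁻¹*(-x))) else 0) atTop
        (𝓝 ((π/2) * Real.sign x)) := by
      simp only [if_pos hx]
      rw [Real.sign_of_pos hx, mul_one]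
      exact hlim_pos x hx
    exact Filter.Tendsto.congr' (hkey.mono fun n h => h.symm) h1

/-- **Gil-Pelaez inversion theorem.** If `Y` is a real random variable on a probability
space with characteristic function `φ(t) = E[exp(i t Y)]`, `P(Y = s) = 0`, and
`t ↦ Im(exp(-i t s) φ(t)) / t` is Lebesgue integrable on `(0, ∞)`, then
`P(Y ≤ s) = 1/2 - (1/π) ∫₀^∞ Im(exp(-i t s) φ(t)) / t dt`. -/
theorem gil_pelaez
    {Ω : Type*} [MeasurableSpace Ω] (μ : Measure Ω) [IsProbabilityMeasure μ]
    (Y : Ω → ℝ) (hY : Measurable Y) (s : ℝ)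
    (φ : ℝ → ℂ) (hφ : ∀ t : ℝ, φ t = ∫ ω, Complex.exp (Complex.I * t * Y ω) ∂μ)
    (hs : μ {ω | Y ω = s} = 0)
    (hint : IntegrableOn
      (fun t : ℝ => (Complex.exp (-Complex.I * t * s) * φ t).im / t) (Ioi 0)) :
    (μ {ω | Y ω ≤ s}).toReal
      = 1 / 2
        - (1 / Real.pi) * ∫ t in Ioi (0 : ℝ), (Complex.exp (-Complex.I * t * s) * φ t).im / t := by
  set f : ℝ → ℝ := fun t => (Complex.exp (-Complex.I * t * s) * φ t).im / t with hfdef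
  -- integrability of the exponential
  have hexp_int : ∀ t : ℝ, Integrable (fun ω =>
      Complex.exp ((t * (Y ω - s) : ℝ) * Complex.I)) μ := by
    intro t
    apply Integrable.mono' (integrable_const (1:ℝ))
    · apply Measurable.aestronglyMeasurable
      exact Complex.measurable_exp.comp
        ((Complex.measurable_ofReal.comp ((measurable_const.mul (hY.sub measurable_const)))).mul
          measurable_const)
    · apply Filter.Eventually.of_forall
      intro ω
      rw [Complex.norm_exp_ofReal_mul_I]
  -- the characteristic function identity
  have him : ∀ t : ℝ, (Complex.exp (-Complex.I * t * s) * φ t).im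
      = ∫ ω, Real.sin (t * (Y ω - s)) ∂μ := by
    intro t
    rw [hφ t, ← integral_const_mul]
    have heq : ∀ ω, Complex.exp (-Complex.I * t * s) * Complex.exp (Complex.I * t * Y ω)
        = Complex.exp ((t * (Y ω - s) : ℝ) * Complex.I) := by
      intro ω
      rw [← Complex.exp_add]
      congr 1
      push_cast
      ring
    simp_rw [heq]
    have h2 := integral_im (𝕜 := ℂ) (hexp_int t)
    rw [RCLike.im_eq_complex_im] at h2
    rw [← h2]
    apply integral_congr_ae
    apply Filter.Eventually.of_forall
    intro ω
    show (Complex.exp ((t * (Y ω - s) : ℝ) * Complex.I)).im = Real.sin (t * (Y ω - s))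
    exact Complex.exp_ofReal_mul_I_im _
  -- integrability on the product space, for n ≥ 1
  have hprod : ∀ n : ℕ, 1 ≤ n → Integrable
      (fun p : ℝ × Ω => Real.sin (p.1 * (Y p.2 - s)) / p.1)
      ((volume.restrict (Ioc ((n:ℝ)⁻¹) (n:ℝ))).prod μ) := by
    intro n hn
    have hn1 : (1:ℝ) ≤ (n:ℝ) := by exact_mod_cast hn
    have ha : (0:ℝ) < (n:ℝ)⁻¹ := by positivity
    haveI : IsFiniteMeasure (volume.restrict (Ioc ((n:ℝ)⁻¹) (n:ℝ))) := by
      constructor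
      rw [Measure.restrict_apply_univ]
      exact measure_Ioc_lt_top
    apply Integrable.mono' (integrable_const ((n:ℝ)))
    · exact ((Real.measurable_sin.comp
        (measurable_fst.mul ((hY.comp measurable_snd).sub measurable_const))).div
          measurable_fst).aestronglyMeasurable
    · have hres : (volume.restrict (Ioc ((n:ℝ)⁻¹) (n:ℝ))).prod μ
          = (volume.prod μ).restrict ((Ioc ((n:ℝ)⁻¹) (n:ℝ)) ×ˢ univ) := by
        rw [← Measure.prod_restrict, Measure.restrict_univ]
      rw [hres]
      filter_upwards [ae_restrict_mem (measurableSet_Ioc.prod MeasurableSet.univ)] with p hp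
      obtain ⟨hp1, -⟩ := hp
      have hppos : 0 < p.1 := lt_trans ha hp1.1
      rw [Real.norm_eq_abs, abs_div, abs_of_pos hppos]
      calc |Real.sin (p.1 * (Y p.2 - s))| / p.1 ≤ 1 / p.1 := by
            gcongr
            exact Real.abs_sin_le_one _
      _ ≤ (n:ℝ) := by
            rw [div_le_iff₀ hppos]
            calc (1:ℝ) = (n:ℝ)⁻¹ * (n:ℝ) := by field_simp
            _ ≤ p.1 * (n:ℝ) := by
                apply mul_le_mul_of_nonneg_right hp1.1.le (by positivity)
            _ = (n:ℝ) * p.1 := mul_comm _ _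
  -- Fubini step
  have key : ∀ n : ℕ, 1 ≤ n →
      (∫ t in Ioc ((n:ℝ)⁻¹) (n:ℝ), f t)
        = ∫ ω, (∫ t in Ioc ((n:ℝ)⁻¹) (n:ℝ), Real.sin (t * (Y ω - s)) / t) ∂μ := by
    intro n hn
    have hcongr : ∀ t ∈ Ioc ((n:ℝ)⁻¹) (n:ℝ),
        f t = ∫ ω, Real.sin (t * (Y ω - s)) / t ∂μ := by
      intro t ht
      rw [hfdef]
      show (Complex.exp (-Complex.I * t * s) * φ t).im / t
        = ∫ ω, Real.sin (t * (Y ω - s)) / t ∂μ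
      rw [him t, integral_div]
    rw [setIntegral_congr_fun measurableSet_Ioc hcongr]
    exact MeasureTheory.integral_integral_swap
      (f := fun t ω => Real.sin (t * (Y ω - s)) / t) (hprod n hn)
  -- dominated convergence on the Ω side
  have hΩ : Tendsto (fun n : ℕ =>
      ∫ ω, (∫ t in Ioc ((n:ℝ)⁻¹) (n:ℝ), Real.sin (t * (Y ω - s)) / t) ∂μ) atTop
      (𝓝 (∫ ω, (π/2) * Real.sign (Y ω - s) ∂μ)) := by
    apply MeasureTheory.tendsto_integral_filter_of_dominated_convergence
      (fun _ : Ω => π + 4)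
    · filter_upwards [Filter.eventually_ge_atTop 1] with n hn
      have h1 := ((hprod n hn).swap).integral_prod_left
      have h2 := h1.aestronglyMeasurable
      apply h2.congr
      apply Filter.Eventually.of_forall
      intro ω
      rfl
    · filter_upwards [Filter.eventually_ge_atTop 1] with n hn
      apply Filter.Eventually.of_forall
      intro ω
      have hn1 : (1:ℝ) ≤ (n:ℝ) := by exact_mod_cast hn
      have ha : (0:ℝ) < (n:ℝ)⁻¹ := by positivity
      have hle : ((n:ℝ)⁻¹ : ℝ) ≤ (n:ℝ) := by
        calc ((n:ℝ)⁻¹ : ℝ) ≤ 1 := by rw [inv_le_one_iff₀]; right; exact hn1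
        _ ≤ (n:ℝ) := hn1
      have hb := gp_abs_bound (x := Y ω - s) ha hle
      rw [Real.norm_eq_abs]
      have : ∀ t : ℝ, Real.sin (t * (Y ω - s)) / t = Real.sin (t * (Y ω - s)) / t := fun _ => rfl
      exact hb
    · exact integrable_const _
    · apply Filter.Eventually.of_forall
      intro ω
      exact gp_limit (Y ω - s)
  -- dominated convergence on the t side
  have hT : Tendsto (fun n : ℕ => ∫ t in Ioc ((n:ℝ)⁻¹) (n:ℝ), f t) atTop
      (𝓝 (∫ t in Ioi (0:ℝ), f t)) := by
    have hsub : ∀ n : ℕ, Ioc ((n:ℝ)⁻¹) (n:ℝ) ⊆ Ioi (0:ℝ) := by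
      intro n t ht
      exact lt_of_le_of_lt (by positivity : (0:ℝ) ≤ (n:ℝ)⁻¹) ht.1
    have heq : ∀ n : ℕ, ∫ t in Ioc ((n:ℝ)⁻¹) (n:ℝ), f t
        = ∫ t in Ioi (0:ℝ), (Ioc ((n:ℝ)⁻¹) (n:ℝ)).indicator f t := by
      intro n
      rw [integral_indicator measurableSet_Ioc,
        Measure.restrict_restrict measurableSet_Ioc,
        inter_eq_left.mpr (hsub n)]
    have hdct : Tendsto (fun n : ℕ =>
        ∫ t in Ioi (0:ℝ), (Ioc ((n:ℝ)⁻¹) (n:ℝ)).indicator f t) atTop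
        (𝓝 (∫ t in Ioi (0:ℝ), f t)) := by
      apply MeasureTheory.tendsto_integral_filter_of_dominated_convergence
        (fun t => ‖f t‖)
      · apply Filter.Eventually.of_forall
        intro n
        exact hint.aestronglyMeasurable.indicator measurableSet_Ioc
      · apply Filter.Eventually.of_forall
        intro n
        apply Filter.Eventually.of_forall
        intro t
        exact norm_indicator_le_norm_self f t
      · exact hint.norm
      · filter_upwards [ae_restrict_mem measurableSet_Ioi] with t ht
        obtain ⟨n₀, hn₀⟩ := exists_nat_gt (max t t⁻¹)
        apply Filter.Tendsto.congr' _ (tendsto_const_nhds (x := f t))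
        filter_upwards [Filter.eventually_ge_atTop n₀] with n hn
        have hcast : (n₀:ℝ) ≤ (n:ℝ) := by exact_mod_cast hn
        have htn : t ≤ (n:ℝ) := le_trans (le_trans (le_max_left _ _) hn₀.le) hcast
        have htinv : t⁻¹ < (n:ℝ) := lt_of_le_of_lt (le_max_right t t⁻¹) (lt_of_lt_of_le hn₀ hcast)
        have ht' : (0:ℝ) < t := ht
        have hnpos : (0:ℝ) < (n:ℝ) := lt_trans (by positivity) htinv
        have hmem : t ∈ Ioc ((n:ℝ)⁻¹) (n:ℝ) := ⟨(inv_lt_comm₀ hnpos ht').mpr htinv, htn⟩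
        exact (indicator_of_mem hmem f).symm
    exact hdct.congr (fun n => (heq n).symm)
  -- combine the two limits
  have hTend2 : Tendsto (fun n : ℕ => ∫ t in Ioc ((n:ℝ)⁻¹) (n:ℝ), f t) atTop
      (𝓝 (∫ ω, (π/2) * Real.sign (Y ω - s) ∂μ)) := by
    apply Filter.Tendsto.congr' _ hΩ
    filter_upwards [Filter.eventually_ge_atTop 1] with n hn
    exact (key n hn).symm
  have hL : (∫ t in Ioi (0:ℝ), f t) = ∫ ω, (π/2) * Real.sign (Y ω - s) ∂μ :=
    tendsto_nhds_unique hT hTend2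
  -- compute the sign integral
  have hm1 : MeasurableSet {ω | s < Y ω} := measurableSet_lt measurable_const hY
  have hm2 : MeasurableSet {ω | Y ω < s} := measurableSet_lt hY measurable_const
  have hmle : MeasurableSet {ω | Y ω ≤ s} := measurableSet_le hY measurable_const
  have hsign : (∫ ω, (π/2) * Real.sign (Y ω - s) ∂μ)
      = (π/2) * ((μ {ω | s < Y ω}).toReal - (μ {ω | Y ω < s}).toReal) := by
    rw [MeasureTheory.integral_const_mul]
    congr 1
    have heq : ∀ ω, Real.sign (Y ω - s)
        = ({ω | s < Y ω} : Set Ω).indicator (fun _ => (1:ℝ)) ω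
          - ({ω | Y ω < s} : Set Ω).indicator (fun _ => (1:ℝ)) ω := by
      intro ω
      rcases lt_trichotomy (Y ω) s with h | h | h
      · rw [Real.sign_of_neg (by linarith : Y ω - s < 0),
          indicator_of_notMem (by simp only [mem_setOf_eq, not_lt]; linarith),
          indicator_of_mem (by simpa using h)]
        norm_num
      · rw [show Y ω - s = 0 by linarith, Real.sign_zero,
          indicator_of_notMem (by simp only [mem_setOf_eq, not_lt]; linarith),
          indicator_of_notMem (by simp only [mem_setOf_eq, not_lt]; linarith)]
        norm_num
      · rw [Real.sign_of_pos (by linarith : 0 < Y ω - s),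
          indicator_of_mem (by simpa using h),
          indicator_of_notMem (by simp only [mem_setOf_eq, not_lt]; linarith)]
        norm_num
    simp_rw [heq]
    rw [integral_sub ((integrable_const (1:ℝ)).indicator hm1)
      ((integrable_const (1:ℝ)).indicator hm2),
      integral_indicator_const _ hm1, integral_indicator_const _ hm2]
    simp [smul_eq_mul]
    rfl
  -- measure arithmetic
  have h1 : μ {ω | s < Y ω} = 1 - μ {ω | Y ω ≤ s} := by
    have hcompl : {ω | s < Y ω} = {ω | Y ω ≤ s}ᶜ := by
      ext ω; simp [not_le]
    rw [hcompl, measure_compl hmle (measure_ne_top μ _), measure_univ]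
  have h2 : μ {ω | Y ω < s} = μ {ω | Y ω ≤ s} := by
    have hsub : {ω | Y ω < s} ⊆ {ω | Y ω ≤ s} := by
      intro ω h
      simp only [mem_setOf_eq] at h ⊢
      exact le_of_lt h
    have hsub2 : {ω | Y ω ≤ s} ⊆ {ω | Y ω < s} ∪ {ω | Y ω = s} := by
      intro ω h
      simp only [mem_setOf_eq, mem_union] at h ⊢
      exact (lt_or_eq_of_le h).imp id id
    refine le_antisymm (measure_mono hsub) ?_
    calc μ {ω | Y ω ≤ s} ≤ μ ({ω | Y ω < s} ∪ {ω | Y ω = s}) := measure_mono hsub2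
    _ ≤ μ {ω | Y ω < s} + μ {ω | Y ω = s} := measure_union_le _ _
    _ = μ {ω | Y ω < s} := by rw [hs, add_zero]
  have hq1 : (μ {ω | s < Y ω}).toReal = 1 - (μ {ω | Y ω ≤ s}).toReal := by
    rw [h1, ENNReal.toReal_sub_of_le prob_le_one ENNReal.one_ne_top, ENNReal.toReal_one]
  have hq2 : (μ {ω | Y ω < s}).toReal = (μ {ω | Y ω ≤ s}).toReal := by rw [h2]
  have hπ : Real.pi ≠ 0 := Real.pi_ne_zero
  rw [hL, hsign, hq1, hq2]
  field_simp
  ring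
end

section
/- For all real α > 1, t > 0 and r₁ > 0, the function r ↦ t²·r^(1−2α)/(1 + t²·r^(−2α)) is Lebesgue integrable on (r₁, ∞) and 2α·t^(−2/α)·∫_{r₁}^∞ t²·r^(1−2α)/(1 + t²·r^(−2α)) dr = β(1; 1/α, 1 − 1/α) − β(1/(1 + t²·r₁^(−2α)); 1/α, 1 − 1/α). -/
open MeasureTheory Set

/-- The lower incomplete Beta function `β(z; x, y) = ∫₀^z u^(x-1) (1-u)^(y-1) du`,
as an improper Lebesgue integral. -/
noncomputable def betaInc (z x y : ℝ) : ℝ :=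
  ∫ u in Ioo (0 : ℝ) z, u ^ (x - 1) * (1 - u) ^ (y - 1)

set_option maxHeartbeats 1000000

/-- For all real `α > 1`, `t > 0` and `r₁ > 0`, the function
`r ↦ t² r^(1-2α) / (1 + t² r^(-2α))` is Lebesgue integrable on `(r₁, ∞)` and
`2 α t^(-2/α) ∫_{r₁}^∞ t² r^(1-2α) / (1 + t² r^(-2α)) dr
  = β(1; 1/α, 1-1/α) - β(1/(1+t² r₁^(-2α)); 1/α, 1-1/α)`. -/
theorem real_exponent_interference_beta
    (α t r₁ : ℝ) (hα : 1 < α) (ht : 0 < t) (hr₁ : 0 < r₁) :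
    IntegrableOn
        (fun r : ℝ => t ^ 2 * r ^ (1 - 2 * α) / (1 + t ^ 2 * r ^ (-(2 * α)))) (Ioi r₁) ∧
      2 * α * t ^ (-2 / α) *
          ∫ r in Ioi r₁, t ^ 2 * r ^ (1 - 2 * α) / (1 + t ^ 2 * r ^ (-(2 * α)))
        = betaInc 1 (1 / α) (1 - 1 / α)
          - betaInc (1 / (1 + t ^ 2 * r₁ ^ (-(2 * α)))) (1 / α) (1 - 1 / α) := by
  have hα0 : 0 < α := by linarith
  have h2α : (0:ℝ) < 2 * α := by linarith
  have hinvα : 0 < 1 / α := by positivity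
  have hinvα1 : 1 / α < 1 := by rw [div_lt_one hα0]; exact hα
  -- the u-side integrand
  set h : ℝ → ℝ := fun u => u ^ (1 / α - 1) * (1 - u) ^ (1 - 1 / α - 1) with hh_def
  -- Step A : integrability of h on Ioo 0 1
  have hexp1 : (-1 : ℝ) < 1 / α - 1 := by linarith
  have hexp2 : (-1 : ℝ) < 1 - 1 / α - 1 := by linarith
  have hInt01 : IntegrableOn h (Ioo (0:ℝ) 1) := by
    have h1 : IntervalIntegrable h volume 0 (1/2) := by
      apply (intervalIntegral.intervalIntegrable_rpow' hexp1).mul_continuousOn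
      apply ContinuousOn.rpow_const (continuousOn_const.sub continuousOn_id)
      intro x hx
      left
      have hx2 : x ≤ 1/2 := by
        rw [uIcc_of_le (by norm_num)] at hx
        exact hx.2
      intro hc
      simp only [Pi.sub_apply, id_eq] at hc
      have : x = 1 := by linarith [sub_eq_zero.mp hc]
      linarith
    have h2 : IntervalIntegrable h volume (1/2) 1 := by
      have hbase : IntervalIntegrable (fun u : ℝ => (1 - u) ^ (1 - 1/α - 1)) volume (1/2) 1 := by
        have h0 := (intervalIntegral.intervalIntegrable_rpow' hexp2
          (a := (1:ℝ)/2) (b := (0:ℝ))).comp_sub_left 1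
        simpa only [show (1:ℝ) - 1/2 = 1/2 by norm_num, show (1:ℝ) - 0 = 1 by norm_num] using h0
      apply hbase.continuousOn_mul
      apply ContinuousOn.rpow_const continuousOn_id
      intro x hx
      left
      have hx2 : (1:ℝ)/2 ≤ x := by
        rw [uIcc_of_le (by norm_num)] at hx
        exact hx.1
      intro hc
      simp only [id_eq] at hc
      rw [hc] at hx2; norm_num at hx2
    have h3 := h1.trans h2
    rw [intervalIntegrable_iff_integrableOn_Ioc_of_le (by norm_num)] at h3
    exact h3.mono_set Ioo_subset_Ioc_self
  -- abbreviations for the substitution point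
  set u₁ : ℝ := 1 / (1 + t ^ 2 * r₁ ^ (-(2 * α))) with hu₁_def
  have hd₁pos : 0 < 1 + t ^ 2 * r₁ ^ (-(2 * α)) := by
    have := Real.rpow_pos_of_pos hr₁ (-(2 * α)); positivity
  have hd₁gt1 : 1 < 1 + t ^ 2 * r₁ ^ (-(2 * α)) := by
    have h0 := Real.rpow_pos_of_pos hr₁ (-(2 * α))
    have : 0 < t ^ 2 * r₁ ^ (-(2 * α)) := by positivity
    linarith
  have hu₁0 : 0 < u₁ := by rw [hu₁_def]; positivity
  have hu₁1 : u₁ < 1 := by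
    rw [hu₁_def, div_lt_one hd₁pos]; exact hd₁gt1
  -- Step B : splitting the beta integrals
  have hsplitInt1 : IntegrableOn h (Ioo (0:ℝ) u₁) :=
    hInt01.mono_set (Ioo_subset_Ioo le_rfl hu₁1.le)
  have hInt_u : IntegrableOn h (Ioo u₁ 1) :=
    hInt01.mono_set (Ioo_subset_Ioo hu₁0.le le_rfl)
  have hsplit : (∫ u in Ioo (0:ℝ) 1, h u)
      = (∫ u in Ioo (0:ℝ) u₁, h u) + ∫ u in Ioo u₁ 1, h u := by
    have hun : Ioo (0:ℝ) 1 = Ioo 0 u₁ ∪ Ico u₁ 1 := (Ioo_union_Ico_eq_Ioo hu₁0 hu₁1.le).symm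
    have hdisj : Disjoint (Ioo (0:ℝ) u₁) (Ico u₁ 1) := by
      apply Set.disjoint_left.mpr
      rintro x ⟨_, hx2⟩ ⟨hx3, _⟩
      exact absurd hx3 (not_le.mpr hx2)
    rw [hun, setIntegral_union hdisj measurableSet_Ico hsplitInt1
      (hInt01.mono_set (by rw [hun]; exact subset_union_right)), integral_Ico_eq_integral_Ioo]
  have hbeta : betaInc 1 (1 / α) (1 - 1 / α) - betaInc u₁ (1 / α) (1 - 1 / α)
      = ∫ u in Ioo u₁ 1, h u := by
    simp only [betaInc, hh_def]
    rw [hsplit]; ring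
  -- Step C : the substitution function
  set g : ℝ → ℝ := fun r => (1 + t ^ 2 * r ^ (-(2 * α)))⁻¹ with hg_def
  set g' : ℝ → ℝ := fun r => 2 * α * t ^ 2 * r ^ (-(2 * α) - 1) * (g r) ^ 2 with hg'_def
  have hdpos : ∀ r : ℝ, 0 < r → 0 < 1 + t ^ 2 * r ^ (-(2 * α)) := by
    intro r hr
    have := Real.rpow_pos_of_pos hr (-(2 * α)); positivity
  have hgpos : ∀ r : ℝ, 0 < r → 0 < g r := fun r hr => inv_pos.mpr (hdpos r hr)
  have hglt1 : ∀ r : ℝ, 0 < r → g r < 1 := by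
    intro r hr
    have h1 : 1 < 1 + t ^ 2 * r ^ (-(2 * α)) := by
      have h0 := Real.rpow_pos_of_pos hr (-(2 * α))
      have : 0 < t ^ 2 * r ^ (-(2 * α)) := by positivity
      linarith
    rw [hg_def]
    simpa using inv_lt_one_of_one_lt₀ h1
  have hderiv : ∀ r ∈ Ioi r₁, HasDerivWithinAt g (g' r) (Ioi r₁) r := by
    intro r hr
    have hr0 : 0 < r := hr₁.trans hr
    have h1 : HasDerivAt (fun r : ℝ => 1 + t ^ 2 * r ^ (-(2 * α)))
        (t ^ 2 * (-(2 * α) * r ^ (-(2 * α) - 1))) r := by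
      simpa using ((Real.hasDerivAt_rpow_const (p := -(2 * α))
        (Or.inl hr0.ne')).const_mul (t ^ 2)).const_add 1
    have h2 := h1.inv (hdpos r hr0).ne'
    have h3 : -(t ^ 2 * (-(2 * α) * r ^ (-(2 * α) - 1))) / (1 + t ^ 2 * r ^ (-(2 * α))) ^ 2
        = g' r := by
      rw [hg'_def, hg_def]
      simp only
      rw [div_eq_mul_inv, ← inv_pow]
      ring
    rw [h3] at h2
    exact h2.hasDerivWithinAt
  have hmono : StrictMonoOn g (Ioi r₁) := by
    intro x hx y hy hxy
    have hx0 : 0 < x := hr₁.trans hx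
    have hrp : y ^ (-(2 * α)) < x ^ (-(2 * α)) :=
      Real.rpow_lt_rpow_of_neg hx0 hxy (by linarith)
    have ht2 : (0:ℝ) < t ^ 2 := by positivity
    have hlt : 1 + t ^ 2 * y ^ (-(2 * α)) < 1 + t ^ 2 * x ^ (-(2 * α)) := by nlinarith
    rw [hg_def]
    simp only
    exact inv_strictAnti₀ (hdpos y (hr₁.trans hy)) hlt
  -- the image of (r₁, ∞) under g
  have himg : g '' Ioi r₁ = Ioo u₁ 1 := by
    apply Subset.antisymm
    · rintro _ ⟨r, hr, rfl⟩
      have hr0 : 0 < r := hr₁.trans hr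
      constructor
      · have hrp : r ^ (-(2 * α)) < r₁ ^ (-(2 * α)) :=
          Real.rpow_lt_rpow_of_neg hr₁ hr (by linarith)
        have ht2 : (0:ℝ) < t ^ 2 := by positivity
        have hlt : 1 + t ^ 2 * r ^ (-(2 * α)) < 1 + t ^ 2 * r₁ ^ (-(2 * α)) := by nlinarith
        rw [hu₁_def, hg_def]
        simp only [one_div]
        exact inv_strictAnti₀ (hdpos r hr0) hlt
      · exact hglt1 r hr0
    · rintro u ⟨hu₁u, hu1⟩
      have hu0 : 0 < u := hu₁0.trans hu₁u
      have h1u : 0 < 1 - u := by linarith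
      set X : ℝ := t ^ 2 * u / (1 - u) with hX_def
      have hXpos : 0 < X := by positivity
      have hR : 0 < r₁ ^ (2 * α) := Real.rpow_pos_of_pos hr₁ _
      have hu₁eq : u₁ = r₁ ^ (2 * α) / (r₁ ^ (2 * α) + t ^ 2) := by
        rw [hu₁_def, Real.rpow_neg hr₁.le]
        rw [div_eq_div_iff (by positivity) (by positivity)]
        field_simp
        try ring
      have hkey : r₁ ^ (2 * α) < X := by
        have h1 : r₁ ^ (2 * α) / (r₁ ^ (2 * α) + t ^ 2) < u := by rw [← hu₁eq]; exact hu₁u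
        rw [div_lt_iff₀ (by positivity)] at h1
        rw [hX_def, lt_div_iff₀ h1u]
        nlinarith
      refine ⟨X ^ (2 * α)⁻¹, ?_, ?_⟩
      · have : r₁ = (r₁ ^ (2 * α)) ^ (2 * α)⁻¹ := (Real.rpow_rpow_inv hr₁.le h2α.ne').symm
        rw [mem_Ioi, this]
        exact Real.rpow_lt_rpow hR.le hkey (by positivity)
      · have hXr : (X ^ (2 * α)⁻¹) ^ (-(2 * α)) = X⁻¹ := by
          rw [← Real.rpow_mul hXpos.le, show (2 * α)⁻¹ * (-(2 * α)) = -1 by field_simp]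
          exact Real.rpow_neg_one X
        rw [hg_def]
        simp only [hXr]
        have hXinv : t ^ 2 * X⁻¹ = (1 - u) / u := by
          rw [hX_def]
          field_simp
        rw [hXinv]
        rw [show 1 + (1 - u) / u = u⁻¹ by field_simp; ring, inv_inv]
  -- Step D : the pointwise identity
  have hpt : ∀ r ∈ Ioi r₁, |g' r| • h (g r)
      = 2 * α * t ^ (-2 / α) *
        (t ^ 2 * r ^ (1 - 2 * α) / (1 + t ^ 2 * r ^ (-(2 * α)))) := by
    intro r hr
    have hr0 : 0 < r := hr₁.trans hr
    have hd : 0 < 1 + t ^ 2 * r ^ (-(2 * α)) := hdpos r hr0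
    have hgp : 0 < g r := hgpos r hr0
    have hrp : 0 < r ^ (-(2 * α)) := Real.rpow_pos_of_pos hr0 _
    have hg'p : 0 < g' r := by
      rw [hg'_def]
      have := Real.rpow_pos_of_pos hr0 (-(2 * α) - 1)
      positivity
    rw [abs_of_pos hg'p, smul_eq_mul]
    have h1mg : 1 - g r = t ^ 2 * r ^ (-(2 * α)) * g r := by
      rw [hg_def]
      field_simp
      ring
    have hEh : h (g r) = (g r) ^ (1 / α - 1) * (t ^ 2 * r ^ (-(2 * α)) * g r) ^ (-(1 / α)) := by
      rw [hh_def]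
      simp only
      rw [h1mg, show 1 - 1 / α - 1 = -(1 / α) by ring]
    rw [hEh]
    have e1 : (t ^ 2 * r ^ (-(2 * α)) * g r) ^ (-(1 / α))
        = t ^ (-2 / α) * r ^ (2:ℝ) * (g r) ^ (-(1 / α)) := by
      rw [Real.mul_rpow (by positivity) hgp.le, Real.mul_rpow (by positivity) hrp.le]
      congr 1
      congr 1
      · rw [← Real.rpow_natCast t 2, ← Real.rpow_mul ht.le]
        congr 1
        push_cast
        ring
      · rw [← Real.rpow_mul hr0.le]
        congr 1
        field_simp
    rw [e1]
    have e4 : (g r) ^ (1 / α - 1) * (g r) ^ (-(1 / α)) = (g r)⁻¹ := by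
      rw [← Real.rpow_add hgp, show 1 / α - 1 + -(1 / α) = -1 by ring]
      exact Real.rpow_neg_one _
    have e5 : r ^ (-(2 * α) - 1) * r ^ (2:ℝ) = r ^ (1 - 2 * α) := by
      rw [← Real.rpow_add hr0]
      congr 1
      ring
    have hdiv : t ^ 2 * r ^ (1 - 2 * α) / (1 + t ^ 2 * r ^ (-(2 * α)))
        = t ^ 2 * r ^ (1 - 2 * α) * g r := by
      rw [hg_def, div_eq_mul_inv]
    rw [hdiv, hg'_def]
    simp only
    calc 2 * α * t ^ 2 * r ^ (-(2 * α) - 1) * g r ^ 2 *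
          (g r ^ (1 / α - 1) * (t ^ (-2 / α) * r ^ (2:ℝ) * g r ^ (-(1 / α))))
        = 2 * α * t ^ 2 * t ^ (-2 / α) * (r ^ (-(2 * α) - 1) * r ^ (2:ℝ)) * g r ^ 2 *
          (g r ^ (1 / α - 1) * g r ^ (-(1 / α))) := by ring
      _ = 2 * α * t ^ 2 * t ^ (-2 / α) * r ^ (1 - 2 * α) * g r ^ 2 * (g r)⁻¹ := by
          rw [e4, e5]
      _ = 2 * α * t ^ (-2 / α) * (t ^ 2 * r ^ (1 - 2 * α) * g r) := by
          rw [sq (g r), show 2 * α * t ^ 2 * t ^ (-2 / α) * r ^ (1 - 2 * α) * (g r * g r) * (g r)⁻¹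
            = 2 * α * t ^ (-2 / α) * (t ^ 2 * r ^ (1 - 2 * α) * g r) * (g r * (g r)⁻¹) from by
              ring, mul_inv_cancel₀ hgp.ne', mul_one]
  -- Step E : assemble everything
  have hEq := integral_image_eq_integral_abs_deriv_smul measurableSet_Ioi hderiv
    hmono.injOn h
  have hIntIff := integrableOn_image_iff_integrableOn_abs_deriv_smul measurableSet_Ioi hderiv
    hmono.injOn h
  rw [himg] at hEq hIntIff
  have hInt_r : IntegrableOn (fun r => |g' r| • h (g r)) (Ioi r₁) := hIntIff.mp hInt_u
  have hInt_f' : IntegrableOn (fun r =>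
      2 * α * t ^ (-2 / α) * (t ^ 2 * r ^ (1 - 2 * α) / (1 + t ^ 2 * r ^ (-(2 * α)))))
      (Ioi r₁) := hInt_r.congr_fun hpt measurableSet_Ioi
  have hC : (0:ℝ) < 2 * α * t ^ (-2 / α) := by
    have := Real.rpow_pos_of_pos ht (-2 / α); positivity
  constructor
  · have h2 := hInt_f'.const_mul ((2 * α * t ^ (-2 / α))⁻¹)
    simpa only [IntegrableOn, inv_mul_cancel_left₀ hC.ne'] using h2
  · rw [hbeta]
    rw [hEq, setIntegral_congr_fun measurableSet_Ioi hpt, integral_const_mul]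
end

section
/- For all real α > 2, t > 0 and r₁ > 0, the function r ↦ t·r^(1−α)/(1 + t²·r^(−2α)) is Lebesgue integrable on (r₁, ∞) and 2α·t^(−2/α)·∫_{r₁}^∞ t·r^(1−α)/(1 + t²·r^(−2α)) dr = β(1; 1/α + 1/2, 1/2 − 1/α) − β(1/(1 + t²·r₁^(−2α)); 1/α + 1/2, 1/2 − 1/α). -/
open MeasureTheory Set

lemma betaAux_left {x : ℝ} (hx : 0 < x) (y : ℝ) :
    IntervalIntegrable (fun u : ℝ => u ^ (x - 1) * (1 - u) ^ (y - 1)) volume 0 (1 / 2) := by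
  apply IntervalIntegrable.mul_continuousOn
  · exact intervalIntegral.intervalIntegrable_rpow' (by linarith)
  · apply continuousOn_of_forall_continuousAt
    intro u hu
    rw [uIcc_of_le (by norm_num : (0:ℝ) ≤ 1 / 2)] at hu
    exact (continuousAt_const.sub continuousAt_id).rpow_const
      (Or.inl (by intro h; simp at h; linarith [hu.2]))

lemma betaAux_full {x y : ℝ} (hx : 0 < x) (hy : 0 < y) :
    IntervalIntegrable (fun u : ℝ => u ^ (x - 1) * (1 - u) ^ (y - 1)) volume 0 1 := by
  refine (betaAux_left hx y).trans ?_
  rw [IntervalIntegrable.iff_comp_neg]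
  convert ((betaAux_left hy x).comp_add_right 1).symm using 1
  · ext1 u
    conv_lhs => rw [mul_comm]
    congr 2 <;> ring
  · norm_num
  · norm_num

lemma betaInc_sub {x y : ℝ} (hx : 0 < x) (hy : 0 < y) {z : ℝ} (hz0 : 0 ≤ z) (hz1 : z ≤ 1) :
    betaInc 1 x y - betaInc z x y
      = ∫ u in Ioo z 1, u ^ (x - 1) * (1 - u) ^ (y - 1) := by
  have hI := betaAux_full hx hy
  have h1 : betaInc 1 x y = ∫ u in (0:ℝ)..1, u ^ (x - 1) * (1 - u) ^ (y - 1) := by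
    rw [betaInc, intervalIntegral.integral_of_le (by norm_num), integral_Ioc_eq_integral_Ioo]
  have h2 : betaInc z x y = ∫ u in (0:ℝ)..z, u ^ (x - 1) * (1 - u) ^ (y - 1) := by
    rw [betaInc, intervalIntegral.integral_of_le hz0, integral_Ioc_eq_integral_Ioo]
  have hsub : uIcc (0:ℝ) z ⊆ uIcc (0:ℝ) 1 := by
    rw [uIcc_of_le hz0, uIcc_of_le (by norm_num : (0:ℝ) ≤ 1)]
    exact Icc_subset_Icc le_rfl hz1
  rw [h1, h2, intervalIntegral.integral_interval_sub_left hI (hI.mono_set hsub),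
    intervalIntegral.integral_of_le hz1, integral_Ioc_eq_integral_Ioo]

/-- For all real `α > 2`, `t > 0` and `r₁ > 0`, the function
`r ↦ t r^(1-α) / (1 + t² r^(-2α))` is Lebesgue integrable on `(r₁, ∞)` and
`2 α t^(-2/α) ∫_{r₁}^∞ t r^(1-α) / (1 + t² r^(-2α)) dr
  = β(1; 1/α + 1/2, 1/2 - 1/α) - β(1/(1+t² r₁^(-2α)); 1/α + 1/2, 1/2 - 1/α)`. -/
theorem imag_exponent_interference_beta
    (α t r₁ : ℝ) (hα : 2 < α) (ht : 0 < t) (hr₁ : 0 < r₁) :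
    IntegrableOn
        (fun r : ℝ => t * r ^ (1 - α) / (1 + t ^ 2 * r ^ (-(2 * α)))) (Ioi r₁) ∧
      2 * α * t ^ (-2 / α) *
          ∫ r in Ioi r₁, t * r ^ (1 - α) / (1 + t ^ 2 * r ^ (-(2 * α)))
        = betaInc 1 (1 / α + 1 / 2) (1 / 2 - 1 / α)
          - betaInc (1 / (1 + t ^ 2 * r₁ ^ (-(2 * α)))) (1 / α + 1 / 2) (1 / 2 - 1 / α) := by
  have hα0 : (0:ℝ) < α := by linarith
  have h2α : (0:ℝ) < 2 * α := by linarith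
  have ht2 : (0:ℝ) < t ^ 2 := by positivity
  set x : ℝ := 1 / α + 1 / 2 with hxdef
  set y : ℝ := 1 / 2 - 1 / α with hydef
  have hinvα : 1 / α < 1 / 2 := by
    rw [div_lt_div_iff₀ hα0 (by norm_num)]; linarith
  have hinvα0 : 0 < 1 / α := by positivity
  have hx : 0 < x := by rw [hxdef]; linarith
  have hy : 0 < y := by rw [hydef]; linarith
  -- helper for inverses
  have hinvlt : ∀ a b : ℝ, 0 < a → a < b → b⁻¹ < a⁻¹ := by
    intro a b ha hab
    rw [← one_div, ← one_div]
    exact one_div_lt_one_div_of_lt ha hab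
  -- positivity of w r := 1 + t^2 * r^(-(2α))
  have hwgt1 : ∀ r : ℝ, 0 < r → 1 < 1 + t ^ 2 * r ^ (-(2 * α)) := by
    intro r hr
    have h := Real.rpow_pos_of_pos hr (-(2 * α))
    nlinarith
  -- strict monotonicity of g on Ici r₁
  have hmono : StrictMonoOn (fun r : ℝ => (1 + t ^ 2 * r ^ (-(2 * α)))⁻¹) (Ici r₁) := by
    intro a ha b hb hab
    have ha0 : 0 < a := lt_of_lt_of_le hr₁ ha
    have hb0 : 0 < b := lt_of_lt_of_le hr₁ hb
    have h1 : b ^ (-(2 * α)) < a ^ (-(2 * α)) := by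
      rw [Real.rpow_neg ha0.le, Real.rpow_neg hb0.le]
      exact hinvlt _ _ (Real.rpow_pos_of_pos ha0 _) (Real.rpow_lt_rpow ha0.le hab h2α)
    have h2 : 1 + t ^ 2 * b ^ (-(2 * α)) < 1 + t ^ 2 * a ^ (-(2 * α)) := by nlinarith
    exact hinvlt _ _ (by linarith [hwgt1 b hb0]) h2
  have hinj : InjOn (fun r : ℝ => (1 + t ^ 2 * r ^ (-(2 * α)))⁻¹) (Ioi r₁) :=
    hmono.injOn.mono Ioi_subset_Ici_self
  -- u₁ facts
  have hW₁ : 1 < 1 + t ^ 2 * r₁ ^ (-(2 * α)) := hwgt1 r₁ hr₁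
  have hu₁0 : 0 < (1 + t ^ 2 * r₁ ^ (-(2 * α)))⁻¹ := inv_pos.mpr (by linarith)
  have hu₁1 : (1 + t ^ 2 * r₁ ^ (-(2 * α)))⁻¹ < 1 := inv_lt_one_of_one_lt₀ hW₁
  -- derivative
  have hderiv : ∀ r ∈ Ioi r₁, HasDerivWithinAt (fun r : ℝ => (1 + t ^ 2 * r ^ (-(2 * α)))⁻¹)
      (2 * α * t ^ 2 * r ^ (-(2 * α) - 1) * ((1 + t ^ 2 * r ^ (-(2 * α)))⁻¹) ^ 2) (Ioi r₁) r := by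
    intro r hr
    have hr0 : 0 < r := hr₁.trans hr
    have h1 : HasDerivAt (fun s : ℝ => s ^ (-(2 * α))) (-(2 * α) * r ^ (-(2 * α) - 1)) r :=
      Real.hasDerivAt_rpow_const (Or.inl hr0.ne')
    have h2 : HasDerivAt (fun s : ℝ => 1 + t ^ 2 * s ^ (-(2 * α)))
        (t ^ 2 * (-(2 * α) * r ^ (-(2 * α) - 1))) r := by
      simpa using (h1.const_mul (t ^ 2)).const_add 1
    have hwne : (1 + t ^ 2 * r ^ (-(2 * α))) ≠ 0 := by
      have := hwgt1 r hr0; linarith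
    have h3 := h2.inv hwne
    have heq : -(t ^ 2 * (-(2 * α) * r ^ (-(2 * α) - 1))) / (1 + t ^ 2 * r ^ (-(2 * α))) ^ 2
        = 2 * α * t ^ 2 * r ^ (-(2 * α) - 1) * ((1 + t ^ 2 * r ^ (-(2 * α)))⁻¹) ^ 2 := by
      rw [div_eq_mul_inv, ← inv_pow]; ring
    exact (heq ▸ h3).hasDerivWithinAt
  -- image
  have himage : (fun r : ℝ => (1 + t ^ 2 * r ^ (-(2 * α)))⁻¹) '' Ioi r₁
      = Ioo ((1 + t ^ 2 * r₁ ^ (-(2 * α)))⁻¹) 1 := by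
    ext u
    constructor
    · rintro ⟨r, hr, rfl⟩
      have hr0 : 0 < r := hr₁.trans hr
      exact ⟨hmono self_mem_Ici (mem_Ici.mpr (le_of_lt hr)) hr, inv_lt_one_of_one_lt₀ (hwgt1 r hr0)⟩
    · rintro ⟨h1, h2⟩
      have hu0 : 0 < u := hu₁0.trans h1
      have h1u : 0 < 1 - u := by linarith
      have hp : 0 < t ^ 2 * u / (1 - u) := by positivity
      refine ⟨(t ^ 2 * u / (1 - u)) ^ (1 / (2 * α)), ?_, ?_⟩
      · -- r₁ < p ^ (1/(2α))
        have hA : 0 < r₁ ^ (2 * α) := Real.rpow_pos_of_pos hr₁ _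
        have hw1 : 1 + t ^ 2 * r₁ ^ (-(2 * α)) = (r₁ ^ (2 * α) + t ^ 2) / r₁ ^ (2 * α) := by
          rw [Real.rpow_neg hr₁.le]; field_simp
        have h1' : r₁ ^ (2 * α) / (r₁ ^ (2 * α) + t ^ 2) < u := by
          rw [hw1, inv_div] at h1; exact h1
        have hkey : r₁ ^ (2 * α) < t ^ 2 * u / (1 - u) := by
          rw [lt_div_iff₀ h1u]
          have := (div_lt_iff₀ (by linarith : (0:ℝ) < r₁ ^ (2 * α) + t ^ 2)).mp h1'
          nlinarith
        have hr₁eq : r₁ = (r₁ ^ (2 * α)) ^ (1 / (2 * α)) := by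
          rw [← Real.rpow_mul hr₁.le, mul_one_div, div_self h2α.ne', Real.rpow_one]
        rw [hr₁eq]
        exact Real.rpow_lt_rpow hA.le hkey (by positivity)
      · -- g (p ^ (1/(2α))) = u
        show (1 + t ^ 2 * ((t ^ 2 * u / (1 - u)) ^ (1 / (2 * α))) ^ (-(2 * α)))⁻¹ = u
        have hpp : ((t ^ 2 * u / (1 - u)) ^ (1 / (2 * α))) ^ (-(2 * α))
            = (t ^ 2 * u / (1 - u))⁻¹ := by
          rw [← Real.rpow_mul hp.le, show 1 / (2 * α) * (-(2 * α)) = -1 by field_simp,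
            Real.rpow_neg_one]
        rw [hpp]
        have : t ^ 2 * (t ^ 2 * u / (1 - u))⁻¹ = (1 - u) / u := by
          field_simp
        rw [this]
        field_simp
        ring
  -- pointwise identity
  have hpt : ∀ r ∈ Ioi r₁,
      |2 * α * t ^ 2 * r ^ (-(2 * α) - 1) * ((1 + t ^ 2 * r ^ (-(2 * α)))⁻¹) ^ 2| •
          (((1 + t ^ 2 * r ^ (-(2 * α)))⁻¹) ^ (x - 1)
            * (1 - (1 + t ^ 2 * r ^ (-(2 * α)))⁻¹) ^ (y - 1))
        = 2 * α * t ^ (-2 / α) * (t * r ^ (1 - α) / (1 + t ^ 2 * r ^ (-(2 * α)))) := by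
    intro r hr
    have hr0 : 0 < r := hr₁.trans hr
    set W : ℝ := 1 + t ^ 2 * r ^ (-(2 * α)) with hW
    have hW1 : 1 < W := hwgt1 r hr0
    have hW0 : 0 < W := by linarith
    have hrp : 0 < r ^ (-(2 * α)) := Real.rpow_pos_of_pos hr0 _
    have hg' : 0 < 2 * α * t ^ 2 * r ^ (-(2 * α) - 1) * (W⁻¹) ^ 2 := by
      have h1 : 0 < r ^ (-(2 * α) - 1) := Real.rpow_pos_of_pos hr0 _
      positivity
    rw [abs_of_pos hg', smul_eq_mul]
    have e1 : 1 - W⁻¹ = t ^ 2 * r ^ (-(2 * α)) * W⁻¹ := by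
      field_simp [hW]
      linarith
    have et : (t ^ 2 : ℝ) ^ (y - 1) = t ^ (2 * (y - 1)) := by
      rw [← Real.rpow_natCast t 2, ← Real.rpow_mul ht.le]
      norm_num
    have ew : ((W ^ (y - 1))⁻¹ : ℝ) = W ^ (1 - y) := by
      rw [← Real.rpow_neg hW0.le, neg_sub]
    have e2 : (1 - W⁻¹) ^ (y - 1)
        = t ^ (2 * (y - 1)) * r ^ (-(2 * α) * (y - 1)) * W ^ (1 - y) := by
      rw [e1, Real.mul_rpow (mul_nonneg (sq_nonneg t) hrp.le) (inv_nonneg.mpr hW0.le),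
        Real.mul_rpow (sq_nonneg t) hrp.le, et, Real.inv_rpow hW0.le, ew,
        ← Real.rpow_mul hr0.le]
    have eA : (W⁻¹ : ℝ) ^ (x - 1) = W ^ (1 - x) := by
      rw [Real.inv_rpow hW0.le, ← Real.rpow_neg hW0.le, neg_sub]
    have eB : ((W⁻¹ : ℝ)) ^ 2 = W ^ (-2 : ℝ) := by
      rw [inv_pow, ← Real.rpow_natCast W 2, ← Real.rpow_neg hW0.le]
      norm_num
    have ew2 : W ^ (-2 : ℝ) * (W ^ (1 - x) * W ^ (1 - y)) = W⁻¹ := by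
      rw [← Real.rpow_add hW0, ← Real.rpow_add hW0,
        show (-2 : ℝ) + (1 - x + (1 - y)) = -1 by rw [hxdef, hydef]; ring,
        Real.rpow_neg_one]
    have er : r ^ (-(2 * α) - 1) * r ^ (-(2 * α) * (y - 1)) = r ^ (1 - α) := by
      rw [← Real.rpow_add hr0]
      congr 1
      rw [hydef]; field_simp; ring
    have et2 : t ^ 2 * t ^ (2 * (y - 1)) = t * t ^ (-2 / α) := by
      have h1 : ((2:ℕ) : ℝ) + 2 * (y - 1) = 1 + -2 / α := by
        rw [hydef]; push_cast; ring
      rw [← Real.rpow_natCast t 2, ← Real.rpow_add ht, h1, Real.rpow_add ht, Real.rpow_one]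
    calc 2 * α * t ^ 2 * r ^ (-(2 * α) - 1) * (W⁻¹) ^ 2
          * ((W⁻¹) ^ (x - 1) * (1 - W⁻¹) ^ (y - 1))
        = 2 * α * (t ^ 2 * t ^ (2 * (y - 1)))
            * (r ^ (-(2 * α) - 1) * r ^ (-(2 * α) * (y - 1)))
            * (W ^ (-2 : ℝ) * (W ^ (1 - x) * W ^ (1 - y))) := by
          rw [eA, e2, eB]; ring
      _ = 2 * α * (t * t ^ (-2 / α)) * r ^ (1 - α) * W⁻¹ := by rw [et2, er, ew2]
      _ = 2 * α * t ^ (-2 / α) * (t * r ^ (1 - α) / W) := by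
          rw [div_eq_mul_inv]; ring
  -- integrability of beta integrand on the image
  have hI_int : IntegrableOn (fun u : ℝ => u ^ (x - 1) * (1 - u) ^ (y - 1))
      (Ioo ((1 + t ^ 2 * r₁ ^ (-(2 * α)))⁻¹) 1) := by
    have hsub : uIcc ((1 + t ^ 2 * r₁ ^ (-(2 * α)))⁻¹) 1 ⊆ uIcc (0:ℝ) 1 := by
      rw [uIcc_of_le hu₁1.le, uIcc_of_le (by norm_num : (0:ℝ) ≤ 1)]
      exact Icc_subset_Icc hu₁0.le le_rfl
    have h := (betaAux_full hx hy).mono_set hsub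
    exact ((intervalIntegrable_iff_integrableOn_Ioc_of_le hu₁1.le).mp h).mono_set
      Ioo_subset_Ioc_self
  -- change of variables
  have hchgInt := integrableOn_image_iff_integrableOn_abs_deriv_smul measurableSet_Ioi
    hderiv hinj (fun u : ℝ => u ^ (x - 1) * (1 - u) ^ (y - 1))
  rw [himage] at hchgInt
  have hInt2 := hchgInt.mp hI_int
  have hInt3 : IntegrableOn
      (fun r : ℝ => 2 * α * t ^ (-2 / α) * (t * r ^ (1 - α) / (1 + t ^ 2 * r ^ (-(2 * α)))))
      (Ioi r₁) :=
    hInt2.congr_fun hpt measurableSet_Ioi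
  have hC : (0:ℝ) < 2 * α * t ^ (-2 / α) := by
    have := Real.rpow_pos_of_pos ht (-2 / α)
    positivity
  have hIntf : IntegrableOn
      (fun r : ℝ => t * r ^ (1 - α) / (1 + t ^ 2 * r ^ (-(2 * α)))) (Ioi r₁) := by
    have h : IntegrableOn (fun r : ℝ => (2 * α * t ^ (-2 / α))⁻¹ *
        (2 * α * t ^ (-2 / α) * (t * r ^ (1 - α) / (1 + t ^ 2 * r ^ (-(2 * α)))))) (Ioi r₁) :=
      hInt3.const_mul (2 * α * t ^ (-2 / α))⁻¹
    refine IntegrableOn.congr_fun h (fun r _ => ?_) measurableSet_Ioi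
    rw [← mul_assoc, inv_mul_cancel₀ hC.ne', one_mul]
  refine ⟨hIntf, ?_⟩
  have hchg := integral_image_eq_integral_abs_deriv_smul measurableSet_Ioi hderiv hinj
    (fun u : ℝ => u ^ (x - 1) * (1 - u) ^ (y - 1))
  rw [himage] at hchg
  rw [one_div]
  calc 2 * α * t ^ (-2 / α) * ∫ r in Ioi r₁, t * r ^ (1 - α) / (1 + t ^ 2 * r ^ (-(2 * α)))
      = ∫ r in Ioi r₁,
          2 * α * t ^ (-2 / α) * (t * r ^ (1 - α) / (1 + t ^ 2 * r ^ (-(2 * α)))) :=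
        (integral_const_mul _ _).symm
    _ = ∫ r in Ioi r₁,
          |2 * α * t ^ 2 * r ^ (-(2 * α) - 1) * ((1 + t ^ 2 * r ^ (-(2 * α)))⁻¹) ^ 2| •
            (((1 + t ^ 2 * r ^ (-(2 * α)))⁻¹) ^ (x - 1)
              * (1 - (1 + t ^ 2 * r ^ (-(2 * α)))⁻¹) ^ (y - 1)) :=
        setIntegral_congr_fun measurableSet_Ioi (fun r hr => (hpt r hr).symm)
    _ = ∫ u in Ioo ((1 + t ^ 2 * r₁ ^ (-(2 * α)))⁻¹) 1, u ^ (x - 1) * (1 - u) ^ (y - 1) :=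
        hchg.symm
    _ = betaInc 1 x y - betaInc ((1 + t ^ 2 * r₁ ^ (-(2 * α)))⁻¹) x y :=
        (betaInc_sub hx hy hu₁0.le hu₁1.le).symm
end

section
/- For all real α > 2, t > 0, τ > 0, r₀ > 0 and R_s > 0, setting r₁ = r₀ + R_s: 2α·t^(−2/α)·( ∫_{r₁}^∞ t·τ·r^(1−α)/(1 + t²·τ²·r^(−2α)) dr − ∫_{r₀}^{r₁} t·r^(1−α)/(1 + t²·r^(−2α)) dr ) = −B̃(1/α + 1/2, t²·r₁^(−2α), t²·r₀^(−2α)) + τ^(2/α)·B̃(1/α + 1/2, 0, t²·τ²·r₁^(−2α)). -/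
open MeasureTheory Set

/-- `B̃(z, a, b) = β(1/(1+a); z, 1-z) - β(1/(1+b); z, 1-z)`. -/
noncomputable def Btilde (z a b : ℝ) : ℝ :=
  betaInc (1 / (1 + a)) z (1 - z) - betaInc (1 / (1 + b)) z (1 - z)

open Filter Topology

section Aux

/-- The real Beta-type integrand is integrable on `(0,1)` when both exponents
are greater than `-1`.  Transferred from `Complex.betaIntegral_convergent`. -/
lemma integrableOn_beta_integrand {p q : ℝ} (hp : -1 < p) (hq : -1 < q) :
    IntegrableOn (fun u : ℝ => u ^ p * (1 - u) ^ q) (Ioo (0:ℝ) 1) := by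
  have h := Complex.betaIntegral_convergent (u := (p:ℂ) + 1) (v := (q:ℂ) + 1)
    (by simp; linarith) (by simp; linarith)
  have h1 : IntegrableOn (fun x : ℝ => (x:ℂ) ^ ((p:ℂ) + 1 - 1) * ((1:ℂ) - x) ^ ((q:ℂ) + 1 - 1))
      (Ioo (0:ℝ) 1) := h.1.mono_set Ioo_subset_Ioc_self
  have h2 := h1.norm
  refine IntegrableOn.congr_fun h2 (fun x hx => ?_) measurableSet_Ioo
  have hx0 : (0:ℝ) < x := hx.1
  have hx1 : (0:ℝ) < 1 - x := by linarith [hx.2]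
  have e1 : ((1:ℂ) - (x:ℝ)) = (((1 - x : ℝ)):ℂ) := by push_cast; ring
  rw [norm_mul, e1]
  rw [Complex.norm_cpow_eq_rpow_re_of_pos hx0, Complex.norm_cpow_eq_rpow_re_of_pos hx1]
  norm_num

/-- Difference of incomplete Beta values as an integral over `Ioo a b`. -/
lemma betaInc_sub_s7 {x y : ℝ}
    (hg : IntegrableOn (fun u : ℝ => u ^ (x-1) * (1-u) ^ (y-1)) (Ioo (0:ℝ) 1))
    {a b : ℝ} (h0 : 0 ≤ a) (hab : a ≤ b) (hb1 : b ≤ 1) :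
    betaInc b x y - betaInc a x y = ∫ u in Ioo a b, u ^ (x-1) * (1-u) ^ (y-1) := by
  have hint : ∀ {u v : ℝ}, 0 ≤ u → u ≤ v → v ≤ 1 →
      IntervalIntegrable (fun w : ℝ => w ^ (x-1) * (1-w) ^ (y-1)) volume u v := by
    intro u v hu h hv
    rw [intervalIntegrable_iff_integrableOn_Ioc_of_le h, integrableOn_Ioc_iff_integrableOn_Ioo]
    exact hg.mono_set (fun w hw => ⟨lt_of_le_of_lt hu hw.1, lt_of_lt_of_le hw.2 hv⟩)
  have key : ∀ {v : ℝ}, 0 ≤ v →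
      betaInc v x y = ∫ u in (0:ℝ)..v, u ^ (x-1) * (1-u) ^ (y-1) := by
    intro v hv
    rw [betaInc, intervalIntegral.integral_of_le hv, integral_Ioc_eq_integral_Ioo]
  rw [key (h0.trans hab), key h0,
    intervalIntegral.integral_interval_sub_left (hint le_rfl (h0.trans hab) hb1)
      (hint le_rfl h0 (hab.trans hb1)),
    intervalIntegral.integral_of_le hab, integral_Ioc_eq_integral_Ioo]

/-- The substitution map `r ↦ 1/(1 + c r^(-2α))`. -/
noncomputable def phi (α c r : ℝ) : ℝ := 1 / (1 + c * r ^ (-(2*α)))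

variable {α c : ℝ}

lemma denom_pos (hc : 0 < c) {r : ℝ} (hr : 0 < r) : 0 < 1 + c * r ^ (-(2*α)) := by
  have := Real.rpow_pos_of_pos hr (-(2*α))
  nlinarith

lemma phi_pos (hc : 0 < c) {r : ℝ} (hr : 0 < r) : 0 < phi α c r :=
  div_pos one_pos (denom_pos hc hr)

lemma phi_lt_one (hc : 0 < c) {r : ℝ} (hr : 0 < r) : phi α c r < 1 := by
  have h1 := Real.rpow_pos_of_pos hr (-(2*α))
  have h2 : (0:ℝ) < c * r ^ (-(2*α)) := mul_pos hc h1
  rw [phi, div_lt_one (denom_pos hc hr)]; linarith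

lemma hasDerivAt_phi (hc : 0 < c) {r : ℝ} (hr : 0 < r) :
    HasDerivAt (phi α c) (2*α*c*r^(-(2*α)-1) / (1 + c * r ^ (-(2*α)))^2) r := by
  have h1 : HasDerivAt (fun x : ℝ => x ^ (-(2*α))) ((-(2*α)) * r ^ (-(2*α)-1)) r :=
    Real.hasDerivAt_rpow_const (Or.inl hr.ne')
  have h2 : HasDerivAt (fun x : ℝ => 1 + c * x ^ (-(2*α)))
      (c * ((-(2*α)) * r ^ (-(2*α)-1))) r := (h1.const_mul c).const_add 1
  have h3 := h2.inv (denom_pos hc hr).ne'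
  have he : phi α c = fun y : ℝ => (1 + c * y ^ (-(2*α)))⁻¹ := by
    funext y; rw [phi, one_div]
  rw [he]
  refine h3.congr_deriv ?_
  ring

lemma strictMonoOn_phi (hα : 0 < α) (hc : 0 < c) : StrictMonoOn (phi α c) (Ioi 0) := by
  intro x hx y hy hxy
  have hx0 : (0:ℝ) < x := hx
  have hy0 : (0:ℝ) < y := hy
  have h1 : y ^ (-(2*α)) < x ^ (-(2*α)) := by
    rw [Real.rpow_neg hx0.le, Real.rpow_neg hy0.le]
    apply inv_strictAnti₀ (Real.rpow_pos_of_pos hx0 _)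
    exact Real.rpow_lt_rpow hx0.le hxy (by linarith)
  have h2 : 1 + c * y ^ (-(2*α)) < 1 + c * x ^ (-(2*α)) := by nlinarith
  exact one_div_lt_one_div_of_lt (denom_pos hc hy0) h2

lemma continuousOn_phi (hc : 0 < c) {s : Set ℝ} (hs : s ⊆ Ioi 0) :
    ContinuousOn (phi α c) s := by
  apply ContinuousOn.div continuousOn_const
  · exact continuousOn_const.add (continuousOn_const.mul
      (ContinuousOn.rpow_const continuousOn_id (fun x hx => Or.inl (ne_of_gt (hs hx)))))
  · exact fun x hx => (denom_pos hc (hs hx)).ne'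

lemma tendsto_phi_atTop (hα : 0 < α) (hc : 0 < c) :
    Tendsto (phi α c) atTop (𝓝 1) := by
  have h1 : Tendsto (fun r : ℝ => r ^ (-(2*α))) atTop (𝓝 0) :=
    tendsto_rpow_neg_atTop (by linarith)
  have h2 : Tendsto (fun r : ℝ => 1 + c * r ^ (-(2*α))) atTop (𝓝 (1 + c * 0)) :=
    (h1.const_mul c).const_add 1
  have h3 := (tendsto_const_nhds (x := (1:ℝ))).div h2 (by norm_num)
  show Tendsto (fun r : ℝ => 1 / (1 + c * r ^ (-(2*α)))) atTop (𝓝 1)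
  simpa [phi, Pi.div_def] using h3

lemma phi_image_Ioo (hα : 0 < α) (hc : 0 < c) {a b : ℝ} (ha : 0 < a) (hab : a < b) :
    phi α c '' Ioo a b = Ioo (phi α c a) (phi α c b) := by
  apply Subset.antisymm
  · rintro _ ⟨x, hx, rfl⟩
    exact ⟨strictMonoOn_phi hα hc ha (lt_trans ha hx.1) hx.1,
      strictMonoOn_phi hα hc (lt_trans ha hx.1) (lt_trans ha hab) hx.2⟩
  · exact intermediate_value_Ioo hab.le
      (continuousOn_phi hc (fun x hx => lt_of_lt_of_le ha hx.1))

lemma phi_image_Ioi (hα : 0 < α) (hc : 0 < c) {a : ℝ} (ha : 0 < a) :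
    phi α c '' Ioi a = Ioo (phi α c a) 1 := by
  apply Subset.antisymm
  · rintro _ ⟨x, hx, rfl⟩
    exact ⟨strictMonoOn_phi hα hc ha (lt_trans ha hx) hx, phi_lt_one hc (lt_trans ha hx)⟩
  · have hcont : ContinuousOn (phi α c) (Ioi a) :=
      continuousOn_phi hc (fun x hx => lt_trans ha hx)
    have ht1 : Tendsto (phi α c) (𝓝[>] a) (𝓝 (phi α c a)) := by
      have : ContinuousAt (phi α c) a := by
        have := (continuousOn_phi (α := α) hc (fun x (hx : x ∈ Ioi (0:ℝ)) => hx))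
        exact this.continuousAt (Ioi_mem_nhds ha)
      exact this.tendsto.mono_left nhdsWithin_le_nhds
    exact isPreconnected_Ioi.intermediate_value_Ioo
      (le_principal_iff.mpr self_mem_nhdsWithin)
      (le_principal_iff.mpr (Ioi_mem_atTop a)) hcont ht1
      (tendsto_phi_atTop hα hc)

lemma pointwise_id (hα : 0 < α) (hc : 0 < c) {z r : ℝ} (hz : 2*α*z = 2 + α) (hr : 0 < r) :
    |2*α*c*r^(-(2*α)-1) / (1 + c * r ^ (-(2*α)))^2| *
      ((phi α c r) ^ (z-1) * (1 - phi α c r) ^ (1 - z - 1)) =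
    2*α*c^(1-z) * (r^(1-α) / (1 + c * r ^ (-(2*α)))) := by
  have hw : 0 < r ^ (-(2*α)) := Real.rpow_pos_of_pos hr _
  have hD : 0 < 1 + c * r ^ (-(2*α)) := by nlinarith
  have hr2 : 0 < r ^ (-(2*α)-1) := Real.rpow_pos_of_pos hr _
  have habs : |2*α*c*r^(-(2*α)-1) / (1 + c * r ^ (-(2*α)))^2|
      = 2*α*c*r^(-(2*α)-1) / (1 + c * r ^ (-(2*α)))^2 := abs_of_pos (by positivity)
  have e1 : phi α c r = 1 / (1 + c * r ^ (-(2*α))) := rfl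
  have e2 : 1 - phi α c r = c * r ^ (-(2*α)) / (1 + c * r ^ (-(2*α))) := by
    rw [e1]; field_simp; ring
  have e3 : (1 / (1 + c * r ^ (-(2*α)))) ^ (z-1) = (1 + c * r ^ (-(2*α))) ^ (1-z) := by
    rw [one_div, Real.inv_rpow hD.le, ← Real.rpow_neg hD.le, show -(z-1) = 1-z by ring]
  have e4 : (c * r ^ (-(2*α)) / (1 + c * r ^ (-(2*α)))) ^ (1-z-1)
      = c^(-z) * r^(2*α*z) * ((1 + c * r ^ (-(2*α))) ^ z) := by
    rw [show (1:ℝ)-z-1 = -z by ring, Real.div_rpow (by positivity) hD.le,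
      Real.mul_rpow hc.le hw.le, Real.rpow_neg hD.le z, div_eq_mul_inv, inv_inv,
      ← Real.rpow_mul hr.le, show -(2*α) * -z = 2*α*z by ring]
  rw [habs, e2, e1, e3, e4]
  have key : r^(-(2*α)-1) * r^(2*α*z) = r^(1-α) := by
    rw [← Real.rpow_add hr]; congr 1; linarith
  have keyc : c * c^(-z) = c^(1-z) := by
    rw [show (1:ℝ)-z = 1 + -z by ring, Real.rpow_add hc, Real.rpow_one]
  have keyD : (1 + c * r ^ (-(2*α)))^(1-z) * (1 + c * r ^ (-(2*α)))^z
      = 1 + c * r ^ (-(2*α)) := by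
    rw [← Real.rpow_add hD]; norm_num
  calc 2*α*c*r^(-(2*α)-1) / (1 + c * r ^ (-(2*α)))^2 *
        ((1 + c * r ^ (-(2*α))) ^ (1-z) *
          (c^(-z) * r^(2*α*z) * ((1 + c * r ^ (-(2*α))) ^ z)))
      = 2*α * (c * c^(-z)) * (r^(-(2*α)-1) * r^(2*α*z)) *
          ((1 + c * r ^ (-(2*α)))^(1-z) * (1 + c * r ^ (-(2*α)))^z)
          / (1 + c * r ^ (-(2*α)))^2 := by ring
    _ = 2*α*c^(1-z) * (r^(1-α) / (1 + c * r ^ (-(2*α)))) := by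
        rw [key, keyc, keyD]; field_simp

/-- Change of variables `u = 1/(1 + c r^(-2α))` in the Beta-type integral. -/
lemma integral_sub_eq (hα : 0 < α) (hc : 0 < c) {z : ℝ} (hz : 2*α*z = 2 + α)
    {s : Set ℝ} (hs : MeasurableSet s) (hss : s ⊆ Ioi 0) :
    ∫ u in phi α c '' s, u ^ (z-1) * (1-u) ^ (1-z-1)
      = 2*α*c^(1-z) * ∫ r in s, r^(1-α) / (1 + c * r ^ (-(2*α))) := by
  rw [integral_image_eq_integral_abs_deriv_smul hs
    (fun x hx => (hasDerivAt_phi hc (hss hx)).hasDerivWithinAt)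
    ((strictMonoOn_phi hα hc).injOn.mono hss)]
  rw [← integral_const_mul]
  refine setIntegral_congr_fun hs (fun r hr => ?_)
  simpa [smul_eq_mul] using pointwise_id hα hc hz (hss hr)

end Aux

/-- Identity for `N(t, r₀)` in the proof of Theorem 1: for `α > 2`, `t > 0`, `τ > 0`,
`r₀ > 0`, `R_s > 0` and `r₁ = r₀ + R_s`,
`2 α t^(-2/α) ( ∫_{r₁}^∞ t τ r^(1-α)/(1+t² τ² r^(-2α)) dr
    - ∫_{r₀}^{r₁} t r^(1-α)/(1+t² r^(-2α)) dr )
  = -B̃(1/α + 1/2, t² r₁^(-2α), t² r₀^(-2α)) + τ^(2/α) B̃(1/α + 1/2, 0, t² τ² r₁^(-2α))`. -/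
theorem N_identity_thm1
    (α t τ r₀ Rs : ℝ) (hα : 2 < α) (ht : 0 < t) (hτ : 0 < τ) (hr₀ : 0 < r₀) (hRs : 0 < Rs)
    (r₁ : ℝ) (hr₁ : r₁ = r₀ + Rs) :
    2 * α * t ^ (-2 / α) *
        ((∫ r in Ioi r₁, t * τ * r ^ (1 - α) / (1 + t ^ 2 * τ ^ 2 * r ^ (-(2 * α))))
          - ∫ r in Ioo r₀ r₁, t * r ^ (1 - α) / (1 + t ^ 2 * r ^ (-(2 * α))))
      = -Btilde (1 / α + 1 / 2) (t ^ 2 * r₁ ^ (-(2 * α))) (t ^ 2 * r₀ ^ (-(2 * α)))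
        + τ ^ (2 / α) * Btilde (1 / α + 1 / 2) 0 (t ^ 2 * τ ^ 2 * r₁ ^ (-(2 * α))) := by
  have hα0 : (0:ℝ) < α := by linarith
  have hαne : α ≠ 0 := hα0.ne'
  have hr₁pos : 0 < r₁ := by rw [hr₁]; linarith
  have hr01 : r₀ < r₁ := by rw [hr₁]; linarith
  set z : ℝ := 1/α + 1/2 with hzdef
  have hz : 2*α*z = 2 + α := by rw [hzdef]; field_simp
  have h1α : 1/α < 1/2 := by
    rw [div_lt_div_iff₀ hα0 (by norm_num)]; linarith
  have h1α0 : 0 < 1/α := by positivity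
  have hz0 : -1 < z - 1 := by rw [hzdef]; linarith
  have hz1 : -1 < 1 - z - 1 := by rw [hzdef]; linarith
  have hg : IntegrableOn (fun u : ℝ => u ^ (z-1) * (1-u) ^ (1-z-1)) (Ioo (0:ℝ) 1) :=
    integrableOn_beta_integrand hz0 hz1
  have hc1 : (0:ℝ) < t^2*τ^2 := by positivity
  have hc2 : (0:ℝ) < t^2 := by positivity
  -- the two model integrals
  set J₁ : ℝ := ∫ r in Ioi r₁, r^(1-α) / (1 + t^2*τ^2 * r ^ (-(2*α))) with hJ₁
  set J₂ : ℝ := ∫ r in Ioo r₀ r₁, r^(1-α) / (1 + t^2 * r ^ (-(2*α))) with hJ₂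
  -- change of variables for the finite integral
  have A2 := integral_sub_eq hα0 hc2 hz measurableSet_Ioo
    (fun x (hx : x ∈ Ioo r₀ r₁) => lt_trans hr₀ hx.1)
  rw [phi_image_Ioo hα0 hc2 hr₀ hr01, ← hJ₂] at A2
  have B2 := betaInc_sub_s7 hg (phi_pos hc2 hr₀).le
    (strictMonoOn_phi hα0 hc2 hr₀ hr₁pos hr01).le (phi_lt_one hc2 hr₁pos).le
  have E2 : betaInc (1 / (1 + t ^ 2 * r₁ ^ (-(2 * α)))) z (1-z)
      - betaInc (1 / (1 + t ^ 2 * r₀ ^ (-(2 * α)))) z (1-z)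
      = 2*α*(t^2)^(1-z) * J₂ := B2.trans A2
  -- change of variables for the infinite integral
  have A1 := integral_sub_eq hα0 hc1 hz measurableSet_Ioi
    (fun x (hx : x ∈ Ioi r₁) => lt_trans hr₁pos hx)
  rw [phi_image_Ioi hα0 hc1 hr₁pos, ← hJ₁] at A1
  have B1 := betaInc_sub_s7 (a := phi α (t^2*τ^2) r₁) (b := 1) hg
    (phi_pos hc1 hr₁pos).le (phi_lt_one hc1 hr₁pos).le le_rfl
  have E1 : betaInc 1 z (1-z)
      - betaInc (1 / (1 + t ^ 2 * τ ^ 2 * r₁ ^ (-(2 * α)))) z (1-z)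
      = 2*α*(t^2*τ^2)^(1-z) * J₁ := B1.trans A1
  -- coefficient identities
  have hsq : ∀ x : ℝ, 0 < x → (x^2:ℝ)^(1-z) = x * x^(-2/α) := by
    intro x hx
    have h2z : ((2:ℕ):ℝ) * (1-z) = 1 + -2/α := by
      rw [hzdef]; push_cast; field_simp; ring
    rw [← Real.rpow_natCast x 2, ← Real.rpow_mul hx.le, h2z,
      Real.rpow_add hx, Real.rpow_one]
  have hii : (t^2:ℝ)^(1-z) = t * t^(-2/α) := hsq t ht
  have hττ : τ^((2:ℝ)/α) * τ^(-2/α) = 1 := by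
    rw [← Real.rpow_add hτ, show (2:ℝ)/α + -2/α = 0 by ring, Real.rpow_zero]
  have hi : τ^((2:ℝ)/α) * (t^2*τ^2)^(1-z) = t*τ*t^(-2/α) := by
    rw [Real.mul_rpow (sq_nonneg t) (sq_nonneg τ), hsq t ht, hsq τ hτ]
    linear_combination (t * t^(-2/α) * τ) * hττ
  -- massage the goal
  simp only [Btilde, mul_div_assoc, integral_const_mul]
  rw [show (1:ℝ)/(1+0) = 1 by norm_num]
  rw [← hJ₁, ← hJ₂, E2, E1]
  linear_combination (2*α*J₂) * hii - (2*α*J₁) * hi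
end

section
/- For all real α > 1, t > 0, τ > 0, p ∈ [0, 1], r₀ > 0 and R_s > 0, setting r₁ = r₀ + R_s: 2α·t^(−2/α)·( p·∫_{r₀}^{r₁} t²·r^(1−2α)/(1 + t²·r^(−2α)) dr + (1−p)·∫_{r₀}^{r₁} t²·τ²·r^(1−2α)/(1 + t²·τ²·r^(−2α)) dr + ∫_{r₁}^∞ t²·τ²·r^(1−2α)/(1 + t²·τ²·r^(−2α)) dr ) = p·B̃(1/α, t²·r₁^(−2α), t²·r₀^(−2α)) + (1−p)·τ^(2/α)·B̃(1/α, t²·τ²·r₁^(−2α), t²·τ²·r₀^(−2α)) + τ^(2/α)·B̃(1/α, 0, t²·τ²·r₁^(−2α)). -/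
open MeasureTheory Set

namespace M2Aux

/-- The Beta integrand with parameters `(1/α, 1 - 1/α)`. -/
noncomputable def gfun (α u : ℝ) : ℝ := u ^ (1 / α - 1) * (1 - u) ^ (-(1 / α))

lemma gfun_continuousOn (α : ℝ) :
    ContinuousOn (gfun α) (Ioo (0 : ℝ) 1) := by
  intro u hu
  apply ContinuousWithinAt.mul
  · exact (Real.continuousAt_rpow_const u _ (Or.inl hu.1.ne')).continuousWithinAt
  · have h1 : ContinuousAt (fun u : ℝ => 1 - u) u := continuousAt_const.sub continuousAt_id
    exact ((Real.continuousAt_rpow_const (1 - u) _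
      (Or.inl (ne_of_gt (by linarith [hu.2])))).comp h1).continuousWithinAt

lemma gfun_intervalIntegrable {α : ℝ} (hα : 1 < α) :
    IntervalIntegrable (gfun α) volume 0 1 := by
  have hα0 : (0:ℝ) < α := by linarith
  have h1 : (-1 : ℝ) < 1 / α - 1 := by
    have : 0 < 1 / α := by positivity
    linarith
  have h2 : (-1 : ℝ) < -(1 / α) := by
    have : 1 / α < 1 := by rw [div_lt_one hα0]; linarith
    linarith
  have A : IntervalIntegrable (gfun α) volume 0 (1/2) := by
    apply (intervalIntegral.intervalIntegrable_rpow' h1).mul_continuousOn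
    apply ContinuousOn.rpow_const (continuous_const.sub continuous_id).continuousOn
    intro u hu
    rw [uIcc_of_le (by norm_num)] at hu
    left
    simp only [Pi.sub_apply, id_eq]
    intro h
    have := hu.2
    linarith
  have B : IntervalIntegrable (gfun α) volume (1/2) 1 := by
    have base : IntervalIntegrable (fun x : ℝ => x ^ (-(1/α))) volume 0 (1/2) :=
      intervalIntegral.intervalIntegrable_rpow' h2
    have comp := (base.comp_sub_left 1).symm
    have comp2 : IntervalIntegrable (fun x : ℝ => (1 - x) ^ (-(1/α))) volume (1/2) 1 := by
      rwa [show (1:ℝ) - 1/2 = 1/2 by norm_num, show (1:ℝ) - 0 = 1 by norm_num] at comp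
    apply comp2.continuousOn_mul
    apply ContinuousOn.rpow_const continuous_id.continuousOn
    intro u hu
    rw [uIcc_of_le (by norm_num)] at hu
    left
    simp only [id_eq]
    intro h
    rw [h] at hu; norm_num at hu
  exact A.trans B

lemma gfun_intble {α : ℝ} (hα : 1 < α) {z₁ z₂ : ℝ} (h₁ : z₁ ∈ Icc (0:ℝ) 1)
    (h₂ : z₂ ∈ Icc (0:ℝ) 1) : IntervalIntegrable (gfun α) volume z₁ z₂ :=
  (gfun_intervalIntegrable hα).mono_set (by
    rw [uIcc_of_le (by norm_num : (0:ℝ) ≤ 1)]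
    exact uIcc_subset_Icc h₁ h₂)

lemma betaInc_eq {α : ℝ} {z : ℝ} (hz : 0 ≤ z) :
    betaInc z (1/α) (1 - 1/α) = ∫ u in (0:ℝ)..z, gfun α u := by
  rw [intervalIntegral.integral_of_le hz, MeasureTheory.integral_Ioc_eq_integral_Ioo]
  simp only [betaInc, gfun, show (1 - 1/α - 1 : ℝ) = -(1/α) by ring]

lemma betaInc_diff {α : ℝ} (hα : 1 < α) {z₁ z₂ : ℝ} (h₁ : z₁ ∈ Icc (0:ℝ) 1)
    (h₂ : z₂ ∈ Icc (0:ℝ) 1) :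
    betaInc z₂ (1/α) (1 - 1/α) - betaInc z₁ (1/α) (1 - 1/α) = ∫ u in z₁..z₂, gfun α u := by
  rw [betaInc_eq h₁.1, betaInc_eq h₂.1]
  exact intervalIntegral.integral_interval_sub_left
    (gfun_intble hα (by norm_num) h₂) (gfun_intble hα (by norm_num) h₁)

variable {α c : ℝ}

/-- substitution map -/
noncomputable def uu (c α r : ℝ) : ℝ := 1 / (1 + c * r ^ (-(2*α)))

/-- its derivative -/
noncomputable def uu' (c α r : ℝ) : ℝ :=
  2 * α * c * r ^ (-(2*α) - 1) / (1 + c * r ^ (-(2*α))) ^ 2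

lemma w_pos (hc : 0 < c) {r : ℝ} (hr : 0 < r) : 0 < c * r ^ (-(2*α)) := by positivity

lemma uu_mem (hc : 0 < c) {r : ℝ} (hr : 0 < r) : uu c α r ∈ Ioo (0:ℝ) 1 := by
  have hw := w_pos (α := α) hc hr
  constructor
  · rw [uu]; positivity
  · rw [uu, div_lt_one (by linarith)]; linarith

lemma uu_hasDerivAt (hc : 0 < c) {r : ℝ} (hr : 0 < r) :
    HasDerivAt (uu c α) (uu' c α r) r := by
  have hw := w_pos (α := α) hc hr
  have h1 : HasDerivAt (fun r : ℝ => r ^ (-(2*α))) (-(2*α) * r ^ (-(2*α) - 1)) r :=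
    Real.hasDerivAt_rpow_const (Or.inl hr.ne')
  have h2 : HasDerivAt (fun r : ℝ => 1 + c * r ^ (-(2*α)))
      (c * (-(2*α) * r ^ (-(2*α) - 1))) r := (h1.const_mul c).const_add 1
  have h3 := h2.inv (by linarith : (1 + c * r ^ (-(2*α))) ≠ 0)
  have heq : uu c α = fun r : ℝ => (1 + c * r ^ (-(2*α)))⁻¹ := by
    funext x; rw [uu, one_div]
  rw [heq, uu']
  exact h3.congr_deriv (by ring)

lemma key_pointwise (hα : 1 < α) (hc : 0 < c) {r : ℝ} (hr : 0 < r) :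
    uu' c α r * gfun α (uu c α r)
      = 2 * α * c ^ (-(1/α)) * (c * r ^ (1 - 2*α) / (1 + c * r ^ (-(2*α)))) := by
  have hα0 : (0:ℝ) < α := by linarith
  set w := c * r ^ (-(2*α)) with hwdef
  have hw : 0 < w := w_pos hc hr
  have h1w : (0:ℝ) < 1 + w := by linarith
  have huu : uu c α r = (1 + w)⁻¹ := by rw [uu, one_div]
  have h1u : 1 - uu c α r = w / (1 + w) := by rw [huu]; field_simp; ring
  have e1 : (uu c α r) ^ (1/α - 1) = (1 + w) ^ (1 - 1/α) := by
    rw [huu, Real.inv_rpow h1w.le, ← Real.rpow_neg h1w.le]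
    congr 1; ring
  have e2 : (1 - uu c α r) ^ (-(1/α)) = w ^ (-(1/α)) * (1 + w) ^ (1/α) := by
    rw [h1u, Real.div_rpow hw.le h1w.le, Real.rpow_neg h1w.le, div_eq_mul_inv, inv_inv]
  have e3 : w ^ (-(1/α)) = c ^ (-(1/α)) * r ^ (2:ℝ) := by
    rw [hwdef, Real.mul_rpow hc.le (by positivity), ← Real.rpow_mul hr.le]
    congr 2; field_simp
  have p1 : (1 + w) ^ (1 - 1/α) * (1 + w) ^ (1/α) = 1 + w := by
    rw [← Real.rpow_add h1w]; norm_num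
  have p2 : r ^ (-(2*α) - 1) * r ^ (2:ℝ) = r ^ (1 - 2*α) := by
    rw [← Real.rpow_add hr]; congr 1; ring
  rw [gfun, e1, e2, e3, uu']
  have h2α : (2*α : ℝ) ≠ 0 := by positivity
  calc 2 * α * c * r ^ (-(2*α) - 1) / (1 + w) ^ 2 *
        ((1 + w) ^ (1 - 1/α) * (c ^ (-(1/α)) * r ^ (2:ℝ) * (1 + w) ^ (1/α)))
      = (2 * α * c * c ^ (-(1/α))) * ((r ^ (-(2*α) - 1) * r ^ (2:ℝ)) *
          ((1 + w) ^ (1 - 1/α) * (1 + w) ^ (1/α))) / (1 + w) ^ 2 := by ring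
    _ = (2 * α * c * c ^ (-(1/α))) * (r ^ (1 - 2*α) * (1 + w)) / (1 + w) ^ 2 := by
        rw [p1, p2]
    _ = 2 * α * c ^ (-(1/α)) * (c * r ^ (1 - 2*α) / (1 + w)) := by
        rw [sq]
        field_simp

lemma fin (hα : 1 < α) (hc : 0 < c) {a b : ℝ} (ha : 0 < a) (hab : a ≤ b) :
    2 * α * ∫ r in Ioo a b, c * r ^ (1 - 2*α) / (1 + c * r ^ (-(2*α)))
      = c ^ (1/α) * (betaInc (uu c α b) (1/α) (1 - 1/α)
          - betaInc (uu c α a) (1/α) (1 - 1/α)) := by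
  have hα0 : (0:ℝ) < α := by linarith
  have hb : 0 < b := lt_of_lt_of_le ha hab
  have hsub : ∀ x ∈ uIcc a b, 0 < x := by
    rw [uIcc_of_le hab]; intro x hx; linarith [hx.1]
  have himg : uu c α '' (uIcc a b) ⊆ Ioo (0:ℝ) 1 := by
    rintro _ ⟨x, hx, rfl⟩; exact uu_mem hc (hsub x hx)
  have hcont_u : ContinuousOn (uu c α) (uIcc a b) := fun x hx =>
    (uu_hasDerivAt hc (hsub x hx)).continuousAt.continuousWithinAt
  have hcont_u' : ContinuousOn (uu' c α) (uIcc a b) := by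
    intro x hx
    have hx0 := hsub x hx
    apply ContinuousAt.continuousWithinAt
    have h1 : ContinuousAt (fun r:ℝ => r ^ (-(2*α) - 1)) x :=
      Real.continuousAt_rpow_const _ _ (Or.inl hx0.ne')
    have h2 : ContinuousAt (fun r:ℝ => r ^ (-(2*α))) x :=
      Real.continuousAt_rpow_const _ _ (Or.inl hx0.ne')
    have hw := w_pos (α := α) hc hx0
    have hden : ((1 + c * x ^ (-(2*α))) ^ 2) ≠ 0 := by positivity
    exact (continuousAt_const.mul h1).div
      (((continuousAt_const.mul h2).const_add 1).pow 2) hden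
  have hderiv : ∀ x ∈ Ioo (min a b) (max a b),
      HasDerivWithinAt (uu c α) (uu' c α x) (Ioi x) x := by
    intro x hx
    rw [min_eq_left hab] at hx
    exact (uu_hasDerivAt hc (lt_trans ha hx.1)).hasDerivWithinAt
  have hgc : ContinuousOn (gfun α) (uu c α '' uIcc a b) :=
    (gfun_continuousOn α).mono himg
  have sub := intervalIntegral.integral_comp_smul_deriv'' hcont_u hderiv hcont_u' hgc
  have hcc : c ^ (1/α) * c ^ (-(1/α)) = 1 := by
    rw [← Real.rpow_add hc]; norm_num
  have congr_pt : EqOn (fun x => c * x ^ (1-2*α) / (1 + c * x ^ (-(2*α))))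
      (fun x => (c ^ (1/α) / (2*α)) * (uu' c α x • (gfun α ∘ uu c α) x)) (uIcc a b) := by
    intro x hx
    have hk := key_pointwise hα hc (hsub x hx)
    simp only [smul_eq_mul, Function.comp]
    rw [hk]
    have h2α : (2*α : ℝ) ≠ 0 := by positivity
    have gen : ∀ A B Y : ℝ, B ≠ 0 → A / B * (B * Y) = A * Y := by
      intro A B Y hB
      rw [← mul_assoc, div_mul_cancel₀ _ hB]
    have helper : c ^ (1/α) / (2*α) * (2 * α * c ^ (-(1/α)) *
        (c * x ^ (1 - 2*α) / (1 + c * x ^ (-(2*α)))))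
        = (c ^ (1/α) * c ^ (-(1/α))) * (c * x ^ (1 - 2*α) / (1 + c * x ^ (-(2*α)))) := by
      rw [show (2 * α * c ^ (-(1/α)) * (c * x ^ (1 - 2*α) / (1 + c * x ^ (-(2*α)))))
          = (2*α) * (c ^ (-(1/α)) * (c * x ^ (1 - 2*α) / (1 + c * x ^ (-(2*α))))) by ring,
        gen _ _ _ h2α]
      ring
    rw [helper, hcc, one_mul]
  have e0 : (∫ r in Ioo a b, c * r ^ (1-2*α) / (1 + c * r ^ (-(2*α))))
      = ∫ r in a..b, c * r ^ (1-2*α) / (1 + c * r ^ (-(2*α))) := by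
    rw [intervalIntegral.integral_of_le hab, MeasureTheory.integral_Ioc_eq_integral_Ioo]
  have e1 : (∫ r in a..b, c * r ^ (1-2*α) / (1 + c * r ^ (-(2*α))))
      = (c ^ (1/α) / (2*α)) * ∫ x in a..b, uu' c α x • (gfun α ∘ uu c α) x := by
    rw [intervalIntegral.integral_congr congr_pt]
    simp [intervalIntegral.integral_const_mul]
  have huA := uu_mem (α := α) hc ha
  have huB := uu_mem (α := α) hc hb
  have e2 : (∫ u in uu c α a..uu c α b, gfun α u)
      = betaInc (uu c α b) (1/α) (1 - 1/α) - betaInc (uu c α a) (1/α) (1 - 1/α) :=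
    (betaInc_diff hα (mem_Icc_of_Ioo huA) (mem_Icc_of_Ioo huB)).symm
  rw [e0, e1, sub, e2]
  field_simp

lemma integrableF (hα : 1 < α) (hc : 0 < c) {a : ℝ} (ha : 0 < a) :
    IntegrableOn (fun r => c * r ^ (1 - 2*α) / (1 + c * r ^ (-(2*α)))) (Ioi a) volume := by
  have hcont : ContinuousOn (fun r => c * r ^ (1 - 2*α) / (1 + c * r ^ (-(2*α)))) (Ioi a) := by
    intro x hx
    have hx0 : 0 < x := lt_trans ha hx
    apply ContinuousAt.continuousWithinAt
    have h1 : ContinuousAt (fun r:ℝ => r ^ (1 - 2*α)) x :=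
      Real.continuousAt_rpow_const _ _ (Or.inl hx0.ne')
    have h2 : ContinuousAt (fun r:ℝ => r ^ (-(2*α))) x :=
      Real.continuousAt_rpow_const _ _ (Or.inl hx0.ne')
    have hw := w_pos (α := α) hc hx0
    exact (continuousAt_const.mul h1).div ((continuousAt_const.mul h2).const_add 1)
      (by linarith)
  have hmaj : IntegrableOn (fun r : ℝ => c * r ^ (1 - 2*α)) (Ioi a) volume :=
    (integrableOn_Ioi_rpow_of_lt (by linarith) ha).const_mul c
  apply hmaj.mono' (hcont.aestronglyMeasurable measurableSet_Ioi)
  rw [ae_restrict_iff' measurableSet_Ioi]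
  filter_upwards with r hr
  have hr0 : 0 < r := lt_trans ha hr
  have hw := w_pos (α := α) hc hr0
  have hnum : 0 ≤ c * r ^ (1 - 2*α) := by positivity
  have hF : 0 ≤ c * r ^ (1 - 2*α) / (1 + c * r ^ (-(2*α))) := by positivity
  rw [Real.norm_of_nonneg hF]
  exact div_le_self hnum (by linarith)

lemma tail (hα : 1 < α) (hc : 0 < c) {a : ℝ} (ha : 0 < a) :
    2 * α * ∫ r in Ioi a, c * r ^ (1 - 2*α) / (1 + c * r ^ (-(2*α)))
      = c ^ (1/α) * (betaInc 1 (1/α) (1 - 1/α) - betaInc (uu c α a) (1/α) (1 - 1/α)) := by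
  have hα0 : (0:ℝ) < α := by linarith
  have hInt := integrableF hα hc ha
  have t1 : Filter.Tendsto (fun b => ∫ r in a..b, c * r ^ (1 - 2*α) / (1 + c * r ^ (-(2*α))))
      Filter.atTop (nhds (∫ r in Ioi a, c * r ^ (1 - 2*α) / (1 + c * r ^ (-(2*α))))) :=
    MeasureTheory.intervalIntegral_tendsto_integral_Ioi a hInt Filter.tendsto_id
  -- the other limit
  have hIcc : IntegrableOn (gfun α) (uIcc (0:ℝ) 1) volume := by
    rw [uIcc_of_le (by norm_num : (0:ℝ) ≤ 1), integrableOn_Icc_iff_integrableOn_Ioc]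
    exact (intervalIntegrable_iff_integrableOn_Ioc_of_le (by norm_num : (0:ℝ) ≤ 1)).mp
      (gfun_intervalIntegrable hα)
  have hHc : ContinuousOn (fun z => ∫ u in (0:ℝ)..z, gfun α u) (uIcc (0:ℝ) 1) :=
    intervalIntegral.continuousOn_primitive_interval hIcc
  have hub : Filter.Tendsto (fun b => uu c α b) Filter.atTop (nhds 1) := by
    have h2α : (0:ℝ) < 2*α := by linarith
    have h0 : Filter.Tendsto (fun b : ℝ => 1 + c * b ^ (-(2*α))) Filter.atTop
        (nhds (1 + c * 0)) :=
      tendsto_const_nhds.add ((tendsto_rpow_neg_atTop h2α).const_mul c)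
    have h1 := (h0.inv₀ (by norm_num)).const_mul 1
    simp only [mul_zero, add_zero, inv_one, mul_one] at h1
    have : (fun b => uu c α b) = fun b : ℝ => 1 * (1 + c * b ^ (-(2*α)))⁻¹ := by
      funext b; rw [uu, one_div, one_mul]
    rw [this]
    exact h1
  have hub' : Filter.Tendsto (fun b => uu c α b) Filter.atTop
      (nhdsWithin 1 (uIcc (0:ℝ) 1)) := by
    apply tendsto_nhdsWithin_of_tendsto_nhds_of_eventually_within _ hub
    filter_upwards [Filter.eventually_gt_atTop 0] with b hb
    rw [uIcc_of_le (by norm_num : (0:ℝ) ≤ 1)]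
    exact mem_Icc_of_Ioo (uu_mem hc hb)
  have hmem1 : (1:ℝ) ∈ uIcc (0:ℝ) 1 := by
    rw [uIcc_of_le (by norm_num : (0:ℝ) ≤ 1)]; exact ⟨by norm_num, le_refl 1⟩
  have hBt : Filter.Tendsto (fun b => betaInc (uu c α b) (1/α) (1 - 1/α)) Filter.atTop
      (nhds (betaInc 1 (1/α) (1 - 1/α))) := by
    have hcomp := (hHc 1 hmem1).tendsto.comp hub'
    have hev : (fun b => betaInc (uu c α b) (1/α) (1 - 1/α)) =ᶠ[Filter.atTop]
        (fun b => ∫ u in (0:ℝ)..(uu c α b), gfun α u) := by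
      filter_upwards [Filter.eventually_gt_atTop 0] with b hb
      exact betaInc_eq (uu_mem hc hb).1.le
    rw [betaInc_eq (by norm_num : (0:ℝ) ≤ 1)]
    exact Filter.Tendsto.congr' hev.symm hcomp
  have t2 : Filter.Tendsto (fun b => ∫ r in a..b, c * r ^ (1 - 2*α) / (1 + c * r ^ (-(2*α))))
      Filter.atTop (nhds (c ^ (1/α) * (betaInc 1 (1/α) (1 - 1/α)
        - betaInc (uu c α a) (1/α) (1 - 1/α)) / (2*α))) := by
    have hev : (fun b => ∫ r in a..b, c * r ^ (1 - 2*α) / (1 + c * r ^ (-(2*α))))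
        =ᶠ[Filter.atTop] (fun b => c ^ (1/α) * (betaInc (uu c α b) (1/α) (1 - 1/α)
          - betaInc (uu c α a) (1/α) (1 - 1/α)) / (2*α)) := by
      filter_upwards [Filter.eventually_ge_atTop a] with b hb
      have hf := fin hα hc ha hb
      have h2α : (2*α : ℝ) ≠ 0 := by positivity
      rw [intervalIntegral.integral_of_le hb, MeasureTheory.integral_Ioc_eq_integral_Ioo]
      rw [eq_div_iff h2α]
      linear_combination hf
    apply Filter.Tendsto.congr' hev.symm
    exact ((hBt.sub tendsto_const_nhds).const_mul _).div_const _
  have heq := tendsto_nhds_unique t1 t2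
  rw [heq]
  field_simp

end M2Aux

open M2Aux in
/-- Identity for `M'(t, r₀)` in the proof of Theorem 2: for `α > 1`, `t > 0`, `τ > 0`,
`p ∈ [0,1]`, `r₀ > 0`, `R_s > 0` and `r₁ = r₀ + R_s`,
`2 α t^(-2/α) ( p ∫_{r₀}^{r₁} t² r^(1-2α)/(1+t² r^(-2α)) dr
    + (1-p) ∫_{r₀}^{r₁} t² τ² r^(1-2α)/(1+t² τ² r^(-2α)) dr
    + ∫_{r₁}^∞ t² τ² r^(1-2α)/(1+t² τ² r^(-2α)) dr )
  = p B̃(1/α, t² r₁^(-2α), t² r₀^(-2α))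
    + (1-p) τ^(2/α) B̃(1/α, t² τ² r₁^(-2α), t² τ² r₀^(-2α))
    + τ^(2/α) B̃(1/α, 0, t² τ² r₁^(-2α))`. -/
theorem M_identity_thm2
    (α t τ p r₀ Rs : ℝ) (hα : 1 < α) (ht : 0 < t) (hτ : 0 < τ)
    (hp : p ∈ Icc (0 : ℝ) 1) (hr₀ : 0 < r₀) (hRs : 0 < Rs)
    (r₁ : ℝ) (hr₁ : r₁ = r₀ + Rs) :
    2 * α * t ^ (-2 / α) *
        (p * (∫ r in Ioo r₀ r₁, t ^ 2 * r ^ (1 - 2 * α) / (1 + t ^ 2 * r ^ (-(2 * α))))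
          + (1 - p) * (∫ r in Ioo r₀ r₁,
              t ^ 2 * τ ^ 2 * r ^ (1 - 2 * α) / (1 + t ^ 2 * τ ^ 2 * r ^ (-(2 * α))))
          + ∫ r in Ioi r₁,
              t ^ 2 * τ ^ 2 * r ^ (1 - 2 * α) / (1 + t ^ 2 * τ ^ 2 * r ^ (-(2 * α))))
      = p * Btilde (1 / α) (t ^ 2 * r₁ ^ (-(2 * α))) (t ^ 2 * r₀ ^ (-(2 * α)))
        + (1 - p) * τ ^ (2 / α) *
            Btilde (1 / α) (t ^ 2 * τ ^ 2 * r₁ ^ (-(2 * α))) (t ^ 2 * τ ^ 2 * r₀ ^ (-(2 * α)))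
        + τ ^ (2 / α) * Btilde (1 / α) 0 (t ^ 2 * τ ^ 2 * r₁ ^ (-(2 * α))) := by
  have hr₁0 : 0 < r₁ := by rw [hr₁]; linarith
  have hab : r₀ ≤ r₁ := by rw [hr₁]; linarith
  have hc1 : (0:ℝ) < t ^ 2 := by positivity
  have hc2 : (0:ℝ) < t ^ 2 * τ ^ 2 := by positivity
  have h1 := fin hα hc1 hr₀ hab
  have h2 := fin hα hc2 hr₀ hab
  have h3 := tail hα hc2 hr₁0
  have e1 : t ^ (-2/α) * (t ^ 2) ^ (1/α) = 1 := by
    rw [← Real.rpow_natCast t 2, ← Real.rpow_mul ht.le, ← Real.rpow_add ht,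
      show (-2/α + (2:ℕ) * (1/α) : ℝ) = 0 by push_cast; ring, Real.rpow_zero]
  have e2 : t ^ (-2/α) * (t ^ 2 * τ ^ 2) ^ (1/α) = τ ^ (2/α) := by
    rw [Real.mul_rpow (by positivity) (by positivity),
      ← Real.rpow_natCast t 2, ← Real.rpow_natCast τ 2,
      ← Real.rpow_mul ht.le, ← Real.rpow_mul hτ.le, ← mul_assoc, ← Real.rpow_add ht]
    rw [show (-2/α + (2:ℕ) * (1/α) : ℝ) = 0 by push_cast; ring, Real.rpow_zero, one_mul,
      show ((2:ℕ) * (1/α) : ℝ) = 2/α by push_cast; ring]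
  simp only [Btilde]
  have hu1 : (1 : ℝ) / (1 + t ^ 2 * r₁ ^ (-(2 * α))) = uu (t^2) α r₁ := rfl
  have hu0 : (1 : ℝ) / (1 + t ^ 2 * r₀ ^ (-(2 * α))) = uu (t^2) α r₀ := rfl
  have hv1 : (1 : ℝ) / (1 + t ^ 2 * τ ^ 2 * r₁ ^ (-(2 * α))) = uu (t^2*τ^2) α r₁ := rfl
  have hv0 : (1 : ℝ) / (1 + t ^ 2 * τ ^ 2 * r₀ ^ (-(2 * α))) = uu (t^2*τ^2) α r₀ := rfl
  have hz : (1 : ℝ) / (1 + 0) = 1 := by norm_num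
  rw [hu1, hu0, hv1, hv0, hz]
  linear_combination (t ^ (-2/α) * p) * h1 + (t ^ (-2/α) * (1-p)) * h2 + t ^ (-2/α) * h3
    + (p * (betaInc (uu (t^2) α r₁) (1/α) (1 - 1/α)
        - betaInc (uu (t^2) α r₀) (1/α) (1 - 1/α))) * e1
    + ((1-p) * (betaInc (uu (t^2*τ^2) α r₁) (1/α) (1 - 1/α)
        - betaInc (uu (t^2*τ^2) α r₀) (1/α) (1 - 1/α))
       + (betaInc 1 (1/α) (1 - 1/α) - betaInc (uu (t^2*τ^2) α r₁) (1/α) (1 - 1/α))) * e2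
end

section
/- For all real α > 2, t > 0, τ > 0, p ∈ [0, 1], r₀ > 0 and R_s > 0, setting r₁ = r₀ + R_s: 2α·t^(−2/α)·( ∫_{r₁}^∞ t·τ·r^(1−α)/(1 + t²·τ²·r^(−2α)) dr + (1−p)·∫_{r₀}^{r₁} t·τ·r^(1−α)/(1 + t²·τ²·r^(−2α)) dr − p·∫_{r₀}^{r₁} t·r^(1−α)/(1 + t²·r^(−2α)) dr ) = −p·B̃(1/α + 1/2, t²·r₁^(−2α), t²·r₀^(−2α)) + (1−p)·τ^(2/α)·B̃(1/α + 1/2, t²·τ²·r₁^(−2α), t²·τ²·r₀^(−2α)) + τ^(2/α)·B̃(1/α + 1/2, 0, t²·τ²·r₁^(−2α)). -/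
open MeasureTheory Set

/-- The map `r ↦ 1/(1 + s² r^(-2α))`. -/
noncomputable def gmap (s α r : ℝ) : ℝ := (1 + s ^ 2 * r ^ (-(2 * α)))⁻¹

lemma gmap_pos {s α r : ℝ} (hr : 0 < r) : 0 < gmap s α r := by
  have : 0 < r ^ (-(2*α)) := Real.rpow_pos_of_pos hr _
  unfold gmap; positivity

lemma gmap_lt_one {s α r : ℝ} (hs : 0 < s) (hr : 0 < r) : gmap s α r < 1 := by
  have h0 : 0 < r ^ (-(2*α)) := Real.rpow_pos_of_pos hr _
  have hs2 : 0 < s ^ 2 := by positivity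
  have h1 : (1:ℝ) < 1 + s ^ 2 * r ^ (-(2*α)) := by nlinarith
  exact inv_lt_one_of_one_lt₀ h1

lemma gmap_strictMono {s α : ℝ} (hs : 0 < s) (hα : 0 < α) :
    StrictMonoOn (gmap s α) (Ioi 0) := by
  intro x hx y hy hxy
  have hx0 : (0:ℝ) < x := hx
  have hy0 : (0:ℝ) < y := hy
  have h1 : y ^ (-(2*α)) < x ^ (-(2*α)) :=
    Real.rpow_lt_rpow_of_neg hx0 hxy (by linarith)
  have hy' : 0 < y ^ (-(2*α)) := Real.rpow_pos_of_pos hy0 _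
  have hs2 : 0 < s ^ 2 := by positivity
  have hlt : 1 + s ^ 2 * y ^ (-(2*α)) < 1 + s ^ 2 * x ^ (-(2*α)) := by nlinarith
  have hpos : 0 < 1 + s ^ 2 * y ^ (-(2*α)) := by nlinarith
  exact inv_strictAnti₀ hpos hlt

lemma gmap_inv {s α : ℝ} (hs : 0 < s) (hα : 0 < α) {u : ℝ} (hu0 : 0 < u) (hu1 : u < 1) :
    0 < (s ^ 2 * u / (1 - u)) ^ (1 / (2 * α)) ∧
      gmap s α ((s ^ 2 * u / (1 - u)) ^ (1 / (2 * α))) = u := by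
  have h1u : 0 < 1 - u := by linarith
  have hb : 0 < s ^ 2 * u / (1 - u) := by positivity
  refine ⟨Real.rpow_pos_of_pos hb _, ?_⟩
  unfold gmap
  rw [← Real.rpow_mul hb.le]
  have he : 1 / (2*α) * (-(2*α)) = -1 := by field_simp
  rw [he, Real.rpow_neg_one]
  have h2 : s ^ 2 * (s ^ 2 * u / (1 - u))⁻¹ = (1 - u) / u := by
    field_simp
  rw [h2]
  rw [show (1:ℝ) + (1-u)/u = u⁻¹ by field_simp; ring]
  exact inv_inv u

lemma gmap_image_Ioo {s α : ℝ} (hs : 0 < s) (hα : 0 < α) {a b : ℝ} (ha : 0 < a) (hab : a < b) :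
    gmap s α '' Ioo a b = Ioo (gmap s α a) (gmap s α b) := by
  have hmono := gmap_strictMono hs hα
  ext u
  simp only [mem_image, mem_Ioo]
  constructor
  · rintro ⟨r, ⟨har, hrb⟩, rfl⟩
    have hr0 : 0 < r := lt_trans ha har
    exact ⟨hmono (mem_Ioi.2 ha) (mem_Ioi.2 hr0) har,
      hmono (mem_Ioi.2 hr0) (mem_Ioi.2 (lt_trans hr0 hrb)) hrb⟩
  · rintro ⟨h1, h2⟩
    have hu0 : 0 < u := lt_trans (gmap_pos ha) h1
    have hu1 : u < 1 := lt_trans h2 (gmap_lt_one hs (lt_trans ha hab))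
    obtain ⟨hr0, hgr⟩ := gmap_inv hs hα hu0 hu1
    set r := (s ^ 2 * u / (1 - u)) ^ (1 / (2 * α)) with hrdef
    refine ⟨r, ⟨?_, ?_⟩, hgr⟩
    · exact ((hmono.lt_iff_lt (mem_Ioi.2 ha) (mem_Ioi.2 hr0)).1 (by rw [hgr]; exact h1))
    · exact ((hmono.lt_iff_lt (mem_Ioi.2 hr0) (mem_Ioi.2 (lt_trans ha hab))).1
        (by rw [hgr]; exact h2))

lemma gmap_image_Ioi {s α : ℝ} (hs : 0 < s) (hα : 0 < α) {a : ℝ} (ha : 0 < a) :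
    gmap s α '' Ioi a = Ioo (gmap s α a) 1 := by
  have hmono := gmap_strictMono hs hα
  ext u
  simp only [mem_image, mem_Ioi, mem_Ioo]
  constructor
  · rintro ⟨r, har, rfl⟩
    have hr0 : 0 < r := lt_trans ha har
    exact ⟨hmono (mem_Ioi.2 ha) (mem_Ioi.2 hr0) har, gmap_lt_one hs hr0⟩
  · rintro ⟨h1, hu1⟩
    have hu0 : 0 < u := lt_trans (gmap_pos ha) h1
    obtain ⟨hr0, hgr⟩ := gmap_inv hs hα hu0 hu1
    exact ⟨_, (hmono.lt_iff_lt (mem_Ioi.2 ha) (mem_Ioi.2 hr0)).1 (by rw [hgr]; exact h1), hgr⟩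

lemma gmap_hasDerivAt {s α : ℝ} (r : ℝ) (hr : 0 < r) :
    HasDerivAt (gmap s α)
      (2 * α * s ^ 2 * r ^ (-(2 * α) - 1) * (gmap s α r) ^ 2) r := by
  have hd : HasDerivAt (fun r : ℝ => 1 + s ^ 2 * r ^ (-(2 * α)))
      (s ^ 2 * (-(2 * α) * r ^ (-(2 * α) - 1))) r := by
    simpa using ((Real.hasDerivAt_rpow_const (p := -(2*α)) (Or.inl hr.ne')).const_mul
      (s ^ 2)).const_add 1
  have hne : 1 + s ^ 2 * r ^ (-(2 * α)) ≠ 0 := by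
    have : 0 < r ^ (-(2*α)) := Real.rpow_pos_of_pos hr _
    positivity
  have := hd.inv hne
  refine this.congr_deriv ?_
  unfold gmap
  field_simp

lemma betaIntegrand_intervalIntegrable_left {a b : ℝ} (ha : 0 < a) :
    IntervalIntegrable (fun u : ℝ => u ^ (a - 1) * (1 - u) ^ (b - 1)) volume 0 (1/2) := by
  apply IntervalIntegrable.mul_continuousOn
  · exact intervalIntegral.intervalIntegrable_rpow' (by linarith)
  · apply ContinuousOn.rpow_const
    · exact (continuous_const.sub continuous_id).continuousOn
    · intro x hx
      rw [uIcc_of_le (by norm_num : (0:ℝ) ≤ 1/2)] at hx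
      exact Or.inl (by simp only [ne_eq, sub_eq_zero]; intro h; rw [← h] at hx; linarith [hx.2])

lemma betaIntegrand_integrableOn {a b : ℝ} (ha : 0 < a) (hb : 0 < b) :
    IntegrableOn (fun u : ℝ => u ^ (a - 1) * (1 - u) ^ (b - 1)) (Ioo (0:ℝ) 1) := by
  have h1 : IntervalIntegrable (fun u : ℝ => u ^ (a - 1) * (1 - u) ^ (b - 1)) volume 0 (1/2) :=
    betaIntegrand_intervalIntegrable_left ha
  have h2 : IntervalIntegrable (fun u : ℝ => u ^ (a - 1) * (1 - u) ^ (b - 1)) volume (1/2) 1 := by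
    have h3 := (betaIntegrand_intervalIntegrable_left (a := b) (b := a) hb).comp_sub_left 1
    norm_num at h3
    have h4 : (fun x : ℝ => (1 - x) ^ (b - 1) * x ^ (a - 1)) =
        fun u : ℝ => u ^ (a - 1) * (1 - u) ^ (b - 1) := funext fun x => mul_comm _ _
    rw [h4] at h3
    exact h3.symm
  have h := (h1.trans h2)
  rw [intervalIntegrable_iff_integrableOn_Ioo_of_le (by norm_num)] at h
  exact h

lemma subst_integral {s α : ℝ} (hα : 2 < α) (hs : 0 < s) {S : Set ℝ}
    (hS : MeasurableSet S) (hsub : S ⊆ Ioi 0) :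
    (∫ u in gmap s α '' S,
        u ^ (1/α + 1/2 - 1) * (1 - u) ^ (1 - (1/α + 1/2) - 1)) =
      2 * α * s ^ (1 - 2/α) * ∫ r in S, r ^ (1 - α) / (1 + s ^ 2 * r ^ (-(2 * α))) := by
  have hα0 : 0 < α := by linarith
  rw [integral_image_eq_integral_abs_deriv_smul hS
      (f' := fun r => 2 * α * s ^ 2 * r ^ (-(2 * α) - 1) * (gmap s α r) ^ 2)
      (fun x hx => (gmap_hasDerivAt x (hsub hx)).hasDerivWithinAt)
      (((gmap_strictMono hs hα0).injOn).mono hsub), ← integral_const_mul]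
  apply setIntegral_congr_fun hS
  intro r hr
  beta_reduce
  have hr0 : 0 < r := hsub hr
  have hc : 0 < r ^ (-(2*α)) := Real.rpow_pos_of_pos hr0 _
  have hc1 : 0 < r ^ (-(2*α) - 1) := Real.rpow_pos_of_pos hr0 _
  have hs2 : (0:ℝ) < s ^ 2 := by positivity
  have hu : 0 < gmap s α r := gmap_pos hr0
  have hderivpos : 0 < 2 * α * s ^ 2 * r ^ (-(2 * α) - 1) * (gmap s α r) ^ 2 := by positivity
  rw [smul_eq_mul, abs_of_pos hderivpos]

  have h1u : 1 - gmap s α r = s ^ 2 * r ^ (-(2*α)) * gmap s α r := by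
    unfold gmap
    have hD : (0:ℝ) < 1 + s ^ 2 * r ^ (-(2*α)) := by positivity
    field_simp
    ring
  rw [show (1 - (1/α + 1/2) - 1 : ℝ) = -(1/α + 1/2) by ring, h1u,
    Real.mul_rpow (by positivity) hu.le, Real.mul_rpow hs2.le hc.le]
  have e1 : (gmap s α r) ^ 2 *
      ((gmap s α r) ^ (1/α + 1/2 - 1) * (gmap s α r) ^ (-(1/α + 1/2))) = gmap s α r := by
    rw [show (gmap s α r) ^ (2:ℕ) = (gmap s α r) ^ ((2:ℕ):ℝ) from (Real.rpow_natCast _ 2).symm,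
      ← Real.rpow_add hu, ← Real.rpow_add hu,
      show ((2:ℕ):ℝ) + (1/α + 1/2 - 1 + -(1/α + 1/2)) = 1 by push_cast; ring, Real.rpow_one]
  have e2 : r ^ (-(2*α) - 1) * (r ^ (-(2*α))) ^ (-(1/α + 1/2)) = r ^ (1 - α) := by
    rw [← Real.rpow_mul hr0.le, ← Real.rpow_add hr0]
    congr 1
    field_simp
    ring
  have e3 : s ^ 2 * (s ^ 2) ^ (-(1/α + 1/2)) = s ^ (1 - 2/α) := by
    rw [show s ^ (2:ℕ) = s ^ ((2:ℕ):ℝ) from (Real.rpow_natCast _ 2).symm,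
      ← Real.rpow_mul hs.le, ← Real.rpow_add hs]
    congr 1
    push_cast
    field_simp
    ring
  have hginv : r ^ (1 - α) / (1 + s ^ 2 * r ^ (-(2*α))) = r ^ (1 - α) * gmap s α r := by
    unfold gmap; rw [div_eq_mul_inv]
  rw [hginv]
  conv_rhs => rw [← e3, ← e2, ← e1]
  ring


lemma betaInc_diff {z : ℝ} (hz0 : 0 < z) (hz1 : z < 1) {c d : ℝ}
    (hc : 0 < c) (hcd : c ≤ d) (hd : d ≤ 1) :
    betaInc d z (1 - z) - betaInc c z (1 - z) =
      ∫ u in Ioo c d, u ^ (z - 1) * (1 - u) ^ (1 - z - 1) := by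
  have hint : IntegrableOn (fun u : ℝ => u ^ (z - 1) * (1 - u) ^ (1 - z - 1)) (Ioo (0:ℝ) 1) :=
    betaIntegrand_integrableOn hz0 (by linarith : (0:ℝ) < 1 - z)
  have hsplit : Ioo (0:ℝ) d = Ioo 0 c ∪ Ico c d := (Ioo_union_Ico_eq_Ioo hc hcd).symm
  unfold betaInc
  rw [hsplit, setIntegral_union (by
      simp only [Set.disjoint_left, mem_Ioo, mem_Ico]
      rintro x ⟨-, h2⟩ ⟨h3, -⟩; linarith) measurableSet_Ico
    (hint.mono_set (fun x hx => ⟨hx.1, lt_of_lt_of_le hx.2 (le_trans hcd hd)⟩))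
    (hint.mono_set (fun x hx => ⟨lt_of_lt_of_le hc hx.1, lt_of_lt_of_le hx.2 hd⟩)),
    integral_Ico_eq_integral_Ioo]
  ring

lemma block_Ioo {α s a b : ℝ} (hα : 2 < α) (hs : 0 < s) (ha : 0 < a) (hab : a < b) :
    2 * α * (∫ r in Ioo a b, s * r ^ (1 - α) / (1 + s ^ 2 * r ^ (-(2 * α)))) =
      s ^ (2/α) * (betaInc (gmap s α b) (1/α + 1/2) (1 - (1/α + 1/2)) -
        betaInc (gmap s α a) (1/α + 1/2) (1 - (1/α + 1/2))) := by
  have hα0 : 0 < α := by linarith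
  have hz0 : (0:ℝ) < 1/α + 1/2 := by positivity
  have hz1 : 1/α + 1/2 < 1 := by
    have : 1/α < 1/2 := by rw [div_lt_div_iff₀ hα0 (by norm_num)]; linarith
    linarith
  have hb0 : 0 < b := lt_trans ha hab
  have hkey := subst_integral hα hs (S := Ioo a b) measurableSet_Ioo
    (fun x hx => lt_trans ha (mem_Ioo.1 hx).1)
  rw [gmap_image_Ioo hs hα0 ha hab] at hkey
  have hdiff := betaInc_diff hz0 hz1 (gmap_pos ha)
    ((gmap_strictMono hs hα0).le_iff_le (mem_Ioi.2 ha) (mem_Ioi.2 hb0) |>.2 hab.le)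
    (gmap_lt_one hs hb0).le
  rw [hdiff, hkey]
  have hJ : (∫ r in Ioo a b, s * r ^ (1 - α) / (1 + s ^ 2 * r ^ (-(2 * α)))) =
      s * ∫ r in Ioo a b, r ^ (1 - α) / (1 + s ^ 2 * r ^ (-(2 * α))) := by
    rw [← integral_const_mul]
    apply setIntegral_congr_fun measurableSet_Ioo
    intro r _
    beta_reduce
    rw [mul_div_assoc]
  rw [hJ]
  have hss : s ^ (2/α) * s ^ (1 - 2/α) = s := by
    rw [← Real.rpow_add hs, show 2/α + (1 - 2/α) = (1:ℝ) by ring, Real.rpow_one]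
  linear_combination
    (-(2 * α * (∫ r in Ioo a b, r ^ (1 - α) / (1 + s ^ 2 * r ^ (-(2 * α)))))) * hss

lemma block_Ioi {α s b : ℝ} (hα : 2 < α) (hs : 0 < s) (hb : 0 < b) :
    2 * α * (∫ r in Ioi b, s * r ^ (1 - α) / (1 + s ^ 2 * r ^ (-(2 * α)))) =
      s ^ (2/α) * (betaInc 1 (1/α + 1/2) (1 - (1/α + 1/2)) -
        betaInc (gmap s α b) (1/α + 1/2) (1 - (1/α + 1/2))) := by
  have hα0 : 0 < α := by linarith
  have hz0 : (0:ℝ) < 1/α + 1/2 := by positivity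
  have hz1 : 1/α + 1/2 < 1 := by
    have : 1/α < 1/2 := by rw [div_lt_div_iff₀ hα0 (by norm_num)]; linarith
    linarith
  have hkey := subst_integral hα hs (S := Ioi b) measurableSet_Ioi
    (fun x hx => lt_trans hb (mem_Ioi.1 hx))
  rw [gmap_image_Ioi hs hα0 hb] at hkey
  have hdiff := betaInc_diff hz0 hz1 (c := gmap s α b) (d := 1)
    (gmap_pos hb) (gmap_lt_one hs hb).le le_rfl
  rw [hdiff, hkey]
  have hJ : (∫ r in Ioi b, s * r ^ (1 - α) / (1 + s ^ 2 * r ^ (-(2 * α)))) =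
      s * ∫ r in Ioi b, r ^ (1 - α) / (1 + s ^ 2 * r ^ (-(2 * α))) := by
    rw [← integral_const_mul]
    apply setIntegral_congr_fun measurableSet_Ioi
    intro r _
    beta_reduce
    rw [mul_div_assoc]
  rw [hJ]
  have hss : s ^ (2/α) * s ^ (1 - 2/α) = s := by
    rw [← Real.rpow_add hs, show 2/α + (1 - 2/α) = (1:ℝ) by ring, Real.rpow_one]
  linear_combination
    (-(2 * α * (∫ r in Ioi b, r ^ (1 - α) / (1 + s ^ 2 * r ^ (-(2 * α)))))) * hss

/-- Identity for `N'(t, r₀)` in the proof of Theorem 2: for `α > 2`, `t > 0`, `τ > 0`,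
`p ∈ [0,1]`, `r₀ > 0`, `R_s > 0` and `r₁ = r₀ + R_s`,
`2 α t^(-2/α) ( ∫_{r₁}^∞ t τ r^(1-α)/(1+t² τ² r^(-2α)) dr
    + (1-p) ∫_{r₀}^{r₁} t τ r^(1-α)/(1+t² τ² r^(-2α)) dr
    - p ∫_{r₀}^{r₁} t r^(1-α)/(1+t² r^(-2α)) dr )
  = -p B̃(1/α + 1/2, t² r₁^(-2α), t² r₀^(-2α))
    + (1-p) τ^(2/α) B̃(1/α + 1/2, t² τ² r₁^(-2α), t² τ² r₀^(-2α))
    + τ^(2/α) B̃(1/α + 1/2, 0, t² τ² r₁^(-2α))`. -/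
theorem N_identity_thm2
    (α t τ p r₀ Rs : ℝ) (hα : 2 < α) (ht : 0 < t) (hτ : 0 < τ)
    (hp : p ∈ Icc (0 : ℝ) 1) (hr₀ : 0 < r₀) (hRs : 0 < Rs)
    (r₁ : ℝ) (hr₁ : r₁ = r₀ + Rs) :
    2 * α * t ^ (-2 / α) *
        ((∫ r in Ioi r₁, t * τ * r ^ (1 - α) / (1 + t ^ 2 * τ ^ 2 * r ^ (-(2 * α))))
          + (1 - p) * (∫ r in Ioo r₀ r₁,
              t * τ * r ^ (1 - α) / (1 + t ^ 2 * τ ^ 2 * r ^ (-(2 * α))))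
          - p * ∫ r in Ioo r₀ r₁, t * r ^ (1 - α) / (1 + t ^ 2 * r ^ (-(2 * α))))
      = -(p * Btilde (1 / α + 1 / 2) (t ^ 2 * r₁ ^ (-(2 * α))) (t ^ 2 * r₀ ^ (-(2 * α))))
        + (1 - p) * τ ^ (2 / α) *
            Btilde (1 / α + 1 / 2)
              (t ^ 2 * τ ^ 2 * r₁ ^ (-(2 * α))) (t ^ 2 * τ ^ 2 * r₀ ^ (-(2 * α)))
        + τ ^ (2 / α) * Btilde (1 / α + 1 / 2) 0 (t ^ 2 * τ ^ 2 * r₁ ^ (-(2 * α))) := by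
  have hα0 : 0 < α := by linarith
  have hr1 : 0 < r₁ := by rw [hr₁]; linarith
  have hab : r₀ < r₁ := by rw [hr₁]; linarith
  have hst : 0 < t * τ := mul_pos ht hτ
  simp only [show t ^ 2 * τ ^ 2 = (t * τ) ^ 2 from (mul_pow t τ 2).symm]
  have hinf := block_Ioi (s := t * τ) hα hst hr1
  have h2 := block_Ioo (s := t * τ) hα hst hr₀ hab
  have h3 := block_Ioo (s := t) hα ht hr₀ hab
  unfold gmap at hinf h2 h3
  simp only [Btilde, one_div]
  rw [show ((1:ℝ) + 0)⁻¹ = 1 by norm_num]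
  rw [show (1:ℝ) / α + 1 / 2 = α⁻¹ + 2⁻¹ by norm_num] at hinf h2 h3
  have hA : t ^ (-2 / α) * (t * τ) ^ (2 / α) = τ ^ (2 / α) := by
    rw [Real.mul_rpow ht.le hτ.le, ← mul_assoc, ← Real.rpow_add ht,
      show -2 / α + 2 / α = (0:ℝ) by ring, Real.rpow_zero, one_mul]
  have hB : t ^ (-2 / α) * t ^ (2 / α) = 1 := by
    rw [← Real.rpow_add ht, show -2 / α + 2 / α = (0:ℝ) by ring, Real.rpow_zero]
  set z := α⁻¹ + 2⁻¹ with hz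
  set B0 := betaInc 1 z (1 - z) with hB0
  set Ba := betaInc (1 + (t * τ) ^ 2 * r₁ ^ (-(2 * α)))⁻¹ z (1 - z) with hBa
  set Bb := betaInc (1 + (t * τ) ^ 2 * r₀ ^ (-(2 * α)))⁻¹ z (1 - z) with hBb
  set Bc := betaInc (1 + t ^ 2 * r₁ ^ (-(2 * α)))⁻¹ z (1 - z) with hBc
  set Bd := betaInc (1 + t ^ 2 * r₀ ^ (-(2 * α)))⁻¹ z (1 - z) with hBd
  clear_value z B0 Ba Bb Bc Bd
  linear_combination (t ^ (-2 / α)) * hinf + (t ^ (-2 / α) * (1 - p)) * h2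
    - (t ^ (-2 / α) * p) * h3
    + (B0 - Ba + (1 - p) * (Ba - Bb)) * hA
    - p * (Bc - Bd) * hB
end
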